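/- arXiv:1305.3722 — 6 statements merged into one kernel-verified Lean document; each statement's English description precedes it below -/
import Mathlib

section
/- Let n ≥ 2. In the cyclotomic KLR algebra R_n, the number of sequences i ∈ I_n such that the idempotent e(i) is nonzero is exactly 2^(n−2) (interpreted as 1 when n = 2). -/
open scoped BigOperators

/-- `I_n`: the sequences `(i_1,…,i_n)` of elements of `ZMod n` that are permutations of
`(0,1,…,n−1)`, encoded as bijections `Fin n → ZMod n` (position `k : Fin n` is the
0-based version of the paper's position `k+1`). -/
def KLRSeq (n : ℕ) : Type := {f : Fin n → ZMod n // Function.Bijective f}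

instance (n : ℕ) : Finite (KLRSeq n) := by
  unfold KLRSeq
  rcases Nat.eq_zero_or_pos n with h | h
  · subst h
    have : IsEmpty {f : Fin 0 → ZMod 0 // Function.Bijective f} := by
      constructor
      rintro ⟨f, hf⟩
      obtain ⟨x, -⟩ := hf.2 0
      exact x.elim0
    infer_instance
  · haveI : NeZero n := ⟨by omega⟩
    infer_instance

noncomputable instance (n : ℕ) : Fintype (KLRSeq n) := Fintype.ofFinite _

noncomputable instance (n : ℕ) : DecidableEq (KLRSeq n) := Classical.decEq _

/-- Generators of the KLR algebra: idempotents `e(i)`, dots `y_k`, crossings `ψ_k`. -/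
inductive KLRGen (n : ℕ) : Type
  | e : KLRSeq n → KLRGen n
  | y : Fin n → KLRGen n
  | psi : Fin (n - 1) → KLRGen n

/-- The free algebra on the KLR generators. -/
abbrev KLRFree (K : Type) [Field K] (n : ℕ) := FreeAlgebra K (KLRGen n)

namespace KLR

/-- `e(i)` in the free algebra. -/
def E (K : Type) [Field K] {n : ℕ} (i : KLRSeq n) : KLRFree K n :=
  FreeAlgebra.ι K (KLRGen.e i)

/-- `y_k` in the free algebra. -/
def Y (K : Type) [Field K] {n : ℕ} (k : Fin n) : KLRFree K n :=
  FreeAlgebra.ι K (KLRGen.y k)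

/-- `ψ_k` in the free algebra. -/
def P (K : Type) [Field K] {n : ℕ} (k : Fin (n - 1)) : KLRFree K n :=
  FreeAlgebra.ι K (KLRGen.psi k)

/-- The first strand position crossed by `ψ_k`. -/
def pos0 {n : ℕ} (k : Fin (n - 1)) : Fin n := ⟨k.val, by have := k.isLt; omega⟩

/-- The second strand position crossed by `ψ_k`. -/
def pos1 {n : ℕ} (k : Fin (n - 1)) : Fin n := ⟨k.val + 1, by have := k.isLt; omega⟩

/-- The sequence `s_k · i`, with entries `k` and `k+1` swapped. -/
def swapSeq {n : ℕ} (k : Fin (n - 1)) (i : KLRSeq n) : KLRSeq n :=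
  ⟨i.1 ∘ Equiv.swap (pos0 k) (pos1 k), i.2.comp (Equiv.swap _ _).bijective⟩

/-- The right-hand side of the quadratic relation `ψ_k² e(i) = …`, depending on how the
colors `i_k` and `i_{k+1}` are related in the quiver of affine type A on `ZMod n`
(`a → b` iff `b = a + 1` and `a ≠ b + 1`, etc.). -/
noncomputable def quadTerm (K : Type) [Field K] {n : ℕ} (k : Fin (n - 1)) (i : KLRSeq n) :
    KLRFree K n :=
  let a := i.1 (pos0 k)
  let b := i.1 (pos1 k)
  if b = a + 1 ∧ a = b + 1 then
    (Y K (pos1 k) - Y K (pos0 k)) * ((Y K (pos0 k) - Y K (pos1 k)) * E K i)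
  else if b = a + 1 ∧ a ≠ b + 1 then (Y K (pos1 k) - Y K (pos0 k)) * E K i
  else if a = b + 1 ∧ b ≠ a + 1 then (Y K (pos0 k) - Y K (pos1 k)) * E K i
  else E K i

/-- The defining relations of the cyclotomic KLR algebra `R_n` (for `Λ = Λ_0`):
the KLR relations together with the cyclotomic relations `y_1 e(i) = 0` (if `i_1 = 0`) and
`e(i) = 0` (if `i_1 ≠ 0`). -/
inductive Rel (K : Type) [Field K] (n : ℕ) : KLRFree K n → KLRFree K n → Prop
  | idem (i j : KLRSeq n) : Rel K n (E K i * E K j) (if i = j then E K i else 0)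
  | sum_eq_one : Rel K n (∑ i : KLRSeq n, E K i) 1
  | ye (k : Fin n) (i : KLRSeq n) : Rel K n (Y K k * E K i) (E K i * Y K k)
  | psie (k : Fin (n - 1)) (i : KLRSeq n) :
      Rel K n (P K k * E K i) (E K (swapSeq k i) * P K k)
  | yy (k l : Fin n) : Rel K n (Y K k * Y K l) (Y K l * Y K k)
  | psiy (k : Fin (n - 1)) (l : Fin n) (h : l.val ≠ k.val ∧ l.val ≠ k.val + 1) :
      Rel K n (P K k * Y K l) (Y K l * P K k)
  | psipsi (k l : Fin (n - 1)) (h : k.val + 1 < l.val ∨ l.val + 1 < k.val) :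
      Rel K n (P K k * P K l) (P K l * P K k)
  | psiy1 (k : Fin (n - 1)) (i : KLRSeq n) :
      Rel K n (P K k * (Y K (pos1 k) * E K i)) (Y K (pos0 k) * (P K k * E K i))
  | ypsi (k : Fin (n - 1)) (i : KLRSeq n) :
      Rel K n (Y K (pos1 k) * (P K k * E K i)) (P K k * (Y K (pos0 k) * E K i))
  | sq (k : Fin (n - 1)) (i : KLRSeq n) :
      Rel K n (P K k * (P K k * E K i)) (quadTerm K k i)
  | braid (k : Fin (n - 1)) (h : k.val + 1 < n - 1) (i : KLRSeq n) :
      Rel K n (P K k * (P K ⟨k.val + 1, h⟩ * (P K k * E K i)))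
              (P K ⟨k.val + 1, h⟩ * (P K k * (P K ⟨k.val + 1, h⟩ * E K i)))
  | cyc0 (hn : 0 < n) (i : KLRSeq n) (h : i.1 ⟨0, hn⟩ = 0) :
      Rel K n (Y K ⟨0, hn⟩ * E K i) 0
  | cyc1 (hn : 0 < n) (i : KLRSeq n) (h : i.1 ⟨0, hn⟩ ≠ 0) :
      Rel K n (E K i) 0

end KLR

/-- The cyclotomic KLR algebra `R_n` (quiver of affine type A on `ZMod n`, `α` the sum of
all simple roots, `Λ = Λ_0`): the quotient of the free algebra on the generators by the
two-sided ideal generated by the relation differences and the cyclotomic generators. -/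
abbrev CKLR (K : Type) [Field K] (n : ℕ) := RingQuot (KLR.Rel K n)

namespace KLR

/-- The quotient map from the free algebra to `R_n`. -/
noncomputable def mk (K : Type) [Field K] (n : ℕ) : KLRFree K n →ₐ[K] CKLR K n :=
  RingQuot.mkAlgHom K (Rel K n)

/-- The idempotent `e(i)` in `R_n`. -/
noncomputable def e (K : Type) [Field K] {n : ℕ} (i : KLRSeq n) : CKLR K n := mk K n (E K i)

/-- The dot `y_k` in `R_n`. -/
noncomputable def y (K : Type) [Field K] {n : ℕ} (k : Fin n) : CKLR K n := mk K n (Y K k)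

/-- The crossing `ψ_k` in `R_n`. -/
noncomputable def p (K : Type) [Field K] {n : ℕ} (k : Fin (n - 1)) : CKLR K n := mk K n (P K k)

end KLR

/-!
Call `i` admissible if every strand of nonzero colour has a strand of adjacent colour to its
left. If some strand of nonzero colour has none, the crossings that move it to the front square
to the identity on the way (`ψ_k² e(i) = e(i)` for non-adjacent colours), so
`e(i) = ψ_k e(s_k i) ψ_k` and the strand eventually reaches position `1`, where the cyclotomic
relation kills the idempotent. Conversely, `R_n` acts on the functions on admissible sequences:
`e(i)` projects onto `i`, the dots act by `0`, and `ψ_k` swaps strands `k, k+1` when their colours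
are not adjacent and acts by `0` otherwise; swaps of non-adjacent colours preserve admissibility,
so all relations can be checked on partial maps of sequences.

Admissible sequences are the walks on the cycle `ℤ/n` that start at `0` and at each step extend
the visited arc at its upper or lower end. The first `n - 2` of these choices are free and the
last one is forced, as both ends then coincide; this gives `2^(n-2)`.
-/

lemma Equiv.swap_mul_swap_mul_swap_eq {α : Type*} [DecidableEq α] {a b c : α}
    (hab : a ≠ b) (hac : a ≠ c) (hbc : b ≠ c) :
    Equiv.swap a b * Equiv.swap b c * Equiv.swap a b =
      Equiv.swap b c * Equiv.swap a b * Equiv.swap b c := by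
  rw [Equiv.swap_mul_swap_mul_swap hab hac, Equiv.swap_comm a b, Equiv.swap_comm b c,
    Equiv.swap_mul_swap_mul_swap hbc.symm hac.symm, Equiv.swap_comm]

lemma Int.eq_of_cast_zmod_eq {n : ℕ} {a b : ℤ} (h : (a : ZMod n) = b) (hab : a - b < n)
    (hba : b - a < n) : a = b := by
  rw [ZMod.intCast_eq_intCast_iff_dvd_sub] at h
  have := Int.eq_zero_of_abs_lt_dvd h (abs_sub_lt_iff.2 ⟨by omega, by omega⟩)
  omega

namespace KLR

variable {n : ℕ}

def Adj (a b : ZMod n) : Prop := b = a + 1 ∨ a = b + 1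

instance (a b : ZMod n) : Decidable (Adj a b) := inferInstanceAs (Decidable (_ ∨ _))

lemma adj_comm {a b : ZMod n} : Adj a b ↔ Adj b a := or_comm

@[simp] lemma pos0_val (k : Fin (n - 1)) : (pos0 k).val = k.val := rfl

@[simp] lemma pos1_val (k : Fin (n - 1)) : (pos1 k).val = k.val + 1 := rfl

lemma swapSeq_apply (k : Fin (n - 1)) (x : KLRSeq n) (p : Fin n) :
    (swapSeq k x).1 p = x.1 (Equiv.swap (pos0 k) (pos1 k) p) := rfl

@[simp] lemma swapSeq_apply_pos0 (k : Fin (n - 1)) (x : KLRSeq n) :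
    (swapSeq k x).1 (pos0 k) = x.1 (pos1 k) := by
  simp [swapSeq_apply]

@[simp] lemma swapSeq_apply_pos1 (k : Fin (n - 1)) (x : KLRSeq n) :
    (swapSeq k x).1 (pos1 k) = x.1 (pos0 k) := by
  simp [swapSeq_apply]

lemma swapSeq_apply_of_ne (k : Fin (n - 1)) (x : KLRSeq n) {p : Fin n}
    (h0 : p.val ≠ k.val) (h1 : p.val ≠ k.val + 1) : (swapSeq k x).1 p = x.1 p := by
  rw [swapSeq_apply, Equiv.swap_apply_of_ne_of_ne (Fin.ne_of_val_ne h0) (Fin.ne_of_val_ne h1)]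

@[simp] lemma swapSeq_swapSeq (k : Fin (n - 1)) (x : KLRSeq n) :
    swapSeq k (swapSeq k x) = x :=
  Subtype.ext <| funext fun p => by simp [swapSeq_apply]

lemma swapSeq_comm {k l : Fin (n - 1)} (hkl : k.val + 1 < l.val ∨ l.val + 1 < k.val)
    (x : KLRSeq n) : swapSeq l (swapSeq k x) = swapSeq k (swapSeq l x) := by
  have hdisj : (Equiv.swap (pos0 k) (pos1 k)).Disjoint (Equiv.swap (pos0 l) (pos1 l)) :=
    Equiv.Perm.disjoint_swap_swap (by simp [Fin.ext_iff]; omega)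
  refine Subtype.ext <| funext fun p => ?_
  simp only [swapSeq_apply, ← Equiv.Perm.mul_apply, hdisj.commute.eq]

lemma swapSeq_braid {k k' : Fin (n - 1)} (hk : k'.val = k.val + 1) (x : KLRSeq n) :
    swapSeq k (swapSeq k' (swapSeq k x)) = swapSeq k' (swapSeq k (swapSeq k' x)) := by
  have hpos : pos0 k' = pos1 k := Fin.ext hk
  refine Subtype.ext <| funext fun p => ?_
  simp only [swapSeq_apply, ← Equiv.Perm.mul_apply, ← mul_assoc, hpos]
  rw [Equiv.swap_mul_swap_mul_swap_eq] <;> simp [Fin.ext_iff] <;> omega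

lemma quadTerm_of_not_adj (K : Type) [Field K] (k : Fin (n - 1)) (i : KLRSeq n)
    (h : ¬ Adj (i.1 (pos0 k)) (i.1 (pos1 k))) : quadTerm K k i = E K i := by
  simp only [Adj, not_or] at h
  simp [quadTerm, h]

section Relations

variable (K : Type) [Field K]

lemma mk_eq_mk_of_rel {a b : KLRFree K n} (h : Rel K n a b) : mk K n a = mk K n b :=
  RingQuot.mkAlgHom_rel K h

lemma mk_E (i : KLRSeq n) : mk K n (E K i) = e K i := rfl

lemma mk_P (k : Fin (n - 1)) : mk K n (P K k) = p K k := rfl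

lemma p_mul_e (k : Fin (n - 1)) (i : KLRSeq n) :
    p K k * e K i = e K (swapSeq k i) * p K k := by
  simpa only [map_mul, mk_E, mk_P] using mk_eq_mk_of_rel K (Rel.psie k i)

lemma p_mul_p_mul_e_of_not_adj (k : Fin (n - 1)) (i : KLRSeq n)
    (h : ¬ Adj (i.1 (pos0 k)) (i.1 (pos1 k))) : p K k * (p K k * e K i) = e K i := by
  simpa only [map_mul, quadTerm_of_not_adj K k i h, mk_E, mk_P] using mk_eq_mk_of_rel K (Rel.sq k i)

lemma e_eq_zero_of_apply_zero_ne_zero (hn : 0 < n) (i : KLRSeq n) (h : i.1 ⟨0, hn⟩ ≠ 0) :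
    e K i = 0 := by
  simpa only [map_zero, mk_E] using mk_eq_mk_of_rel K (Rel.cyc1 hn i h)

end Relations

def IsAdmissible (j : KLRSeq n) : Prop :=
  ∀ p : Fin n, j.1 p ≠ 0 → ∃ m < p, Adj (j.1 m) (j.1 p)

lemma IsAdmissible.apply_zero {j : KLRSeq n} (hj : IsAdmissible j) (hn : 0 < n) :
    j.1 ⟨0, hn⟩ = 0 := by
  by_contra h
  obtain ⟨m, hm, -⟩ := hj _ h
  exact Nat.not_lt_zero _ hm

lemma IsAdmissible.swapSeq {x : KLRSeq n} (hx : IsAdmissible x) (k : Fin (n - 1))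
    (h : ¬ Adj (x.1 (pos0 k)) (x.1 (pos1 k))) : IsAdmissible (swapSeq k x) := by
  intro p hp
  by_cases hp0 : p = pos0 k
  · subst hp0
    rw [swapSeq_apply_pos0] at hp ⊢
    obtain ⟨m, hm, hadj⟩ := hx _ hp
    have hmk : m ≠ pos0 k := by rintro rfl; exact h hadj
    have hm' : m.val < k.val := by
      rw [Fin.lt_def, pos1_val] at hm; rw [Ne, Fin.ext_iff, pos0_val] at hmk; omega
    exact ⟨m, hm', by rwa [swapSeq_apply_of_ne k x (by omega) (by omega)]⟩
  by_cases hp1 : p = pos1 k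
  · subst hp1
    rw [swapSeq_apply_pos1] at hp ⊢
    obtain ⟨m, hm, hadj⟩ := hx _ hp
    have hm' : m.val < k.val := hm
    exact ⟨m, by rw [Fin.lt_def, pos1_val]; omega,
      by rwa [swapSeq_apply_of_ne k x (by omega) (by omega)]⟩
  rw [swapSeq_apply_of_ne k x (fun h' => hp0 (Fin.ext h')) (fun h' => hp1 (Fin.ext h'))] at hp ⊢
  obtain ⟨m, hm, hadj⟩ := hx p hp
  refine ⟨Equiv.swap (pos0 k) (pos1 k) m, ?_, by rwa [swapSeq_apply, Equiv.swap_apply_self]⟩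
  rw [Fin.ext_iff] at hp0 hp1
  rw [Fin.lt_def] at hm ⊢
  rw [Equiv.swap_apply_def]
  split_ifs <;> simp only [Fin.ext_iff, pos0_val, pos1_val] at * <;> omega

theorem e_eq_zero_of_forall_not_adj (K : Type) [Field K] (k : ℕ) (hk : k < n) (j : KLRSeq n)
    (hj : j.1 ⟨k, hk⟩ ≠ 0)
    (hadj : ∀ m : Fin n, m.val < k → ¬ Adj (j.1 m) (j.1 ⟨k, hk⟩)) :
    e K j = 0 := by
  induction k generalizing j with
  | zero => exact e_eq_zero_of_apply_zero_ne_zero K hk j hj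
  | succ k ih =>
    set κ : Fin (n - 1) := ⟨k, by omega⟩
    have hswap : e K (swapSeq κ j) = 0 := by
      apply ih (by omega)
      · rwa [show (⟨k, _⟩ : Fin n) = pos0 κ from rfl, swapSeq_apply_pos0]
      · intro m hm
        rw [swapSeq_apply_of_ne κ j (by simp [κ]; omega) (by simp [κ]; omega),
          show (⟨k, _⟩ : Fin n) = pos0 κ from rfl, swapSeq_apply_pos0]
        exact hadj m (by omega)
    rw [← p_mul_p_mul_e_of_not_adj K κ j (hadj (pos0 κ) (by simp [κ])), p_mul_e, hswap,
      zero_mul, mul_zero]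

theorem e_eq_zero_of_not_isAdmissible (K : Type) [Field K] (j : KLRSeq n)
    (h : ¬ IsAdmissible j) : e K j = 0 := by
  simp only [IsAdmissible, not_forall, not_exists, not_and] at h
  obtain ⟨⟨k, hk⟩, hj, hadj⟩ := h
  exact e_eq_zero_of_forall_not_adj K k hk j hj hadj

section PartialMaps

variable (K : Type) [Field K] {X : Type}

def pullback (f : X → Option X) : Module.End K (X → K) where
  toFun v x := (f x).elim 0 v
  map_add' u v := funext fun x => by cases h : f x <;> simp [h]
  map_smul' c v := funext fun x => by cases h : f x <;> simp [h]

lemma pullback_apply (f : X → Option X) (v : X → K) (x : X) :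
    pullback K f v x = (f x).elim 0 v := rfl

lemma pullback_mul (f g : X → Option X) :
    pullback K f * pullback K g = pullback K (f >=> g) := by
  ext v x
  simp only [Module.End.mul_apply, pullback_apply, Bind.kleisliRight, Option.bind_eq_bind]
  cases f x <;> rfl

lemma pullback_none : pullback K (fun _ : X => none) = 0 := rfl

end PartialMaps

section Representation

def IsSwapClosed (S : Set (KLRSeq n)) : Prop :=
  ∀ (k : Fin (n - 1)) (x : KLRSeq n), x ∈ S → ¬ Adj (x.1 (pos0 k)) (x.1 (pos1 k)) →
    swapSeq k x ∈ S

variable (S : Set (KLRSeq n)) (hS : IsSwapClosed S)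

noncomputable def idemMap (i : KLRSeq n) (x : S) : Option S := if x.1 = i then some x else none

def crossingMap (k : Fin (n - 1)) (x : S) : Option S :=
  if h : Adj (x.1.1 (pos0 k)) (x.1.1 (pos1 k)) then none else some ⟨swapSeq k x, hS k x x.2 h⟩

lemma idemMap_fish_idemMap (i j : KLRSeq n) :
    idemMap S i >=> idemMap S j = if i = j then idemMap S i else fun _ => none := by
  funext x
  simp only [Bind.kleisliRight, Option.bind_eq_bind, idemMap]
  split_ifs <;> simp_all [idemMap]

lemma crossingMap_fish_idemMap (k : Fin (n - 1)) (i : KLRSeq n) :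
    crossingMap S hS k >=> idemMap S i = idemMap S (swapSeq k i) >=> crossingMap S hS k := by
  funext ⟨x, hxS⟩
  by_cases hx : x = swapSeq k i
  · subst hx
    simp only [Bind.kleisliRight, Option.bind_eq_bind, idemMap, crossingMap, if_true,
      Option.bind_some, swapSeq_apply_pos0, swapSeq_apply_pos1, adj_comm]
    split_ifs <;> simp [idemMap]
  · have hx' : swapSeq k x ≠ i := fun h => hx (by rw [← h, swapSeq_swapSeq])
    simp [Bind.kleisliRight, idemMap, crossingMap, hx, hx']

lemma crossingMap_fish_crossingMap (k : Fin (n - 1)) :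
    crossingMap S hS k >=> crossingMap S hS k =
      fun x => if Adj (x.1.1 (pos0 k)) (x.1.1 (pos1 k)) then none else some x := by
  funext x
  simp only [Bind.kleisliRight, Option.bind_eq_bind, crossingMap]
  split_ifs <;> simp_all [crossingMap, adj_comm]

lemma crossingMap_fish_comm {k l : Fin (n - 1)}
    (hkl : k.val + 1 < l.val ∨ l.val + 1 < k.val) :
    crossingMap S hS k >=> crossingMap S hS l = crossingMap S hS l >=> crossingMap S hS k := by
  have hk0 (y : KLRSeq n) : (swapSeq l y).1 (pos0 k) = y.1 (pos0 k) :=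
    swapSeq_apply_of_ne l y (by rw [pos0_val]; omega) (by rw [pos0_val]; omega)
  have hk1 (y : KLRSeq n) : (swapSeq l y).1 (pos1 k) = y.1 (pos1 k) :=
    swapSeq_apply_of_ne l y (by rw [pos1_val]; omega) (by rw [pos1_val]; omega)
  have hl0 (y : KLRSeq n) : (swapSeq k y).1 (pos0 l) = y.1 (pos0 l) :=
    swapSeq_apply_of_ne k y (by rw [pos0_val]; omega) (by rw [pos0_val]; omega)
  have hl1 (y : KLRSeq n) : (swapSeq k y).1 (pos1 l) = y.1 (pos1 l) :=
    swapSeq_apply_of_ne k y (by rw [pos1_val]; omega) (by rw [pos1_val]; omega)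
  funext x
  by_cases hk : Adj (x.1.1 (pos0 k)) (x.1.1 (pos1 k)) <;>
    by_cases hl : Adj (x.1.1 (pos0 l)) (x.1.1 (pos1 l)) <;>
    simp [Bind.kleisliRight, crossingMap, hk, hl, hk0, hk1, hl0, hl1, swapSeq_comm hkl]

lemma crossingMap_fish_braid {k k' : Fin (n - 1)} (hk : k'.val = k.val + 1) :
    (crossingMap S hS k >=> crossingMap S hS k') >=> crossingMap S hS k =
      (crossingMap S hS k' >=> crossingMap S hS k) >=> crossingMap S hS k' := by
  have hpos : pos0 k' = pos1 k := Fin.ext hk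
  have E2 (y : KLRSeq n) : (swapSeq k y).1 (pos1 k') = y.1 (pos1 k') :=
    swapSeq_apply_of_ne k y (by simp; omega) (by simp; omega)
  have E3 (y : KLRSeq n) : (swapSeq k' y).1 (pos0 k) = y.1 (pos0 k) :=
    swapSeq_apply_of_ne k' y (by simp; omega) (by simp; omega)
  have E4 (y : KLRSeq n) : (swapSeq k' y).1 (pos1 k) = y.1 (pos1 k') := by
    rw [← hpos, swapSeq_apply_pos0]
  funext x
  by_cases hab : Adj (x.1.1 (pos0 k)) (x.1.1 (pos1 k)) <;>
    by_cases hac : Adj (x.1.1 (pos0 k)) (x.1.1 (pos1 k')) <;>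
    by_cases hbc : Adj (x.1.1 (pos1 k)) (x.1.1 (pos1 k')) <;>
    simp [Bind.kleisliRight, crossingMap, hab, hac, hbc, E2, E3, E4, hpos, swapSeq_braid hk]

lemma crossingMap_fish_crossingMap_fish_idemMap (k : Fin (n - 1)) (i : KLRSeq n) :
    (crossingMap S hS k >=> crossingMap S hS k) >=> idemMap S i =
      if Adj (i.1 (pos0 k)) (i.1 (pos1 k)) then fun _ => none else idemMap S i := by
  rw [crossingMap_fish_crossingMap]
  funext ⟨x, hxS⟩
  by_cases hx : x = i
  · subst hx
    split_ifs <;> simp [Bind.kleisliRight, idemMap, *]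
  · split_ifs <;> simp [Bind.kleisliRight, idemMap, hx]

variable (K : Type) [Field K]

noncomputable def generatorAction : KLRGen n → Module.End K (S → K)
  | .e i => pullback K (idemMap S i)
  | .y _ => 0
  | .psi k => pullback K (crossingMap S hS k)

noncomputable def rep : KLRFree K n →ₐ[K] Module.End K (S → K) :=
  FreeAlgebra.lift K (generatorAction S hS K)

lemma rep_E (i : KLRSeq n) : rep S hS K (E K i) = pullback K (idemMap S i) :=
  FreeAlgebra.lift_ι_apply _ _

lemma rep_Y (k : Fin n) : rep S hS K (Y K k) = 0 :=
  FreeAlgebra.lift_ι_apply _ _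

lemma rep_P (k : Fin (n - 1)) : rep S hS K (P K k) = pullback K (crossingMap S hS k) :=
  FreeAlgebra.lift_ι_apply _ _

lemma rep_quadTerm (k : Fin (n - 1)) (i : KLRSeq n) :
    rep S hS K (quadTerm K k i) =
      if Adj (i.1 (pos0 k)) (i.1 (pos1 k)) then 0 else pullback K (idemMap S i) := by
  by_cases hadj : Adj (i.1 (pos0 k)) (i.1 (pos1 k))
  · rw [if_pos hadj]
    simp only [quadTerm]
    split_ifs
    · simp [rep_Y]
    · simp [rep_Y]
    · simp [rep_Y]
    · exact absurd hadj (by unfold Adj; tauto)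
  · rw [if_neg hadj, quadTerm_of_not_adj K k i hadj, rep_E]

lemma rep_rel (hS0 : ∀ x ∈ S, ∀ hn : 0 < n, x.1 ⟨0, hn⟩ = 0) ⦃a b : KLRFree K n⦄
    (h : Rel K n a b) : rep S hS K a = rep S hS K b := by
  cases h with
  | idem i j =>
    rw [map_mul, rep_E, rep_E, pullback_mul, idemMap_fish_idemMap, apply_ite (rep S hS K)]
    split_ifs <;> simp [rep_E, pullback_none]
  | sum_eq_one =>
    refine LinearMap.ext fun v => funext fun x => ?_
    simp only [map_sum, rep_E, LinearMap.sum_apply, Finset.sum_apply, pullback_apply, idemMap,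
      map_one, Module.End.one_apply]
    rw [Finset.sum_eq_single x.1 (fun c _ hc => by simp [Ne.symm hc]) (by simp)]
    simp
  | psie k i =>
    simp only [map_mul, rep_P, rep_E, pullback_mul, crossingMap_fish_idemMap]
  | psipsi k l hkl =>
    simp only [map_mul, rep_P, pullback_mul, crossingMap_fish_comm S hS hkl]
  | sq k i =>
    simp only [map_mul, rep_P, rep_E, pullback_mul, ← fish_assoc, rep_quadTerm,
      crossingMap_fish_crossingMap_fish_idemMap]
    split_ifs <;> simp [pullback_none]
  | braid k h i =>
    simp only [map_mul, rep_P, rep_E, pullback_mul, ← fish_assoc,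
      crossingMap_fish_braid S hS (k' := ⟨k.val + 1, h⟩) rfl]
  | cyc1 hn i hi =>
    have : idemMap S i = fun _ => none := by
      funext x
      exact if_neg fun hx : x.1 = i => hi (hx ▸ hS0 x.1 x.2 hn)
    rw [rep_E, this, pullback_none, map_zero]
  | _ => simp [rep_Y]

end Representation

theorem e_ne_zero_of_mem (K : Type) [Field K] {S : Set (KLRSeq n)} (hS : IsSwapClosed S)
    (hS0 : ∀ x ∈ S, ∀ hn : 0 < n, x.1 ⟨0, hn⟩ = 0) {i : KLRSeq n} (hi : i ∈ S) :
    e K i ≠ 0 := by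
  intro hzero
  have hrep : pullback K (idemMap S i) = 0 := by
    rw [← rep_E S hS K, ← RingQuot.liftAlgHom_mkAlgHom_apply K _ (rep_rel S hS K hS0)]
    exact (congrArg _ hzero).trans (map_zero _)
  simpa [pullback_apply, idemMap] using congrFun (LinearMap.congr_fun hrep fun _ => 1) ⟨i, hi⟩

theorem e_ne_zero_of_isAdmissible (K : Type) [Field K] {i : KLRSeq n} (hi : IsAdmissible i) :
    e K i ≠ 0 :=
  e_ne_zero_of_mem K (S := {x | IsAdmissible x}) (fun k _ hx h => hx.swapSeq k h)
    (fun _ hx hn => hx.apply_zero hn) hi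

section Walk

variable (c : ℕ → Bool)

def walkMax : ℕ → ℤ
  | 0 => 0
  | p + 1 => walkMax p + if c p then 1 else 0

/-- The walk on `ℤ` that starts at `0` and at step `p` jumps just above its range so far if
`c p`, and just below it otherwise. -/
def walk : ℕ → ℤ
  | 0 => 0
  | p + 1 => if c p then walkMax c p + 1 else walkMax c p - p - 1

lemma walk_succ_of_true {p : ℕ} (h : c p = true) : walk c (p + 1) = walkMax c p + 1 := by
  simp [walk, h]

lemma walk_succ_of_false {p : ℕ} (h : c p = false) : walk c (p + 1) = walkMax c p - p - 1 := by
  simp [walk, h]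

lemma image_walk_range (p : ℕ) :
    (Finset.range (p + 1)).image (walk c) = Finset.Icc (walkMax c p - p) (walkMax c p) := by
  induction p with
  | zero => simp [walk, walkMax]
  | succ p ih =>
    rw [Finset.range_add_one, Finset.image_insert, ih]
    ext z
    cases h : c p <;> simp [walk, walkMax, h] <;> omega

lemma walk_mem_Icc {m p : ℕ} (h : m ≤ p) :
    walk c m ∈ Finset.Icc (walkMax c p - p) (walkMax c p) := by
  rw [← image_walk_range]
  exact Finset.mem_image_of_mem _ (Finset.mem_range.2 (by omega))

lemma exists_walk_eq {p : ℕ} {z : ℤ} (hz : z ∈ Finset.Icc (walkMax c p - p) (walkMax c p)) :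
    ∃ m ≤ p, walk c m = z := by
  rw [← image_walk_range] at hz
  obtain ⟨m, hm, rfl⟩ := Finset.mem_image.1 hz
  exact ⟨m, by simp at hm; omega, rfl⟩

lemma walk_injOn (p : ℕ) : Set.InjOn (walk c) (Finset.range (p + 1)) := by
  rw [← Finset.card_image_iff, image_walk_range, Int.card_Icc]
  simp only [Finset.card_range]
  omega

end Walk

lemma walkMax_sub_ne_walk_add_one (c : ℕ → Bool) {q m : ℕ} (hq : q + 2 < n) (hm : m ≤ q) :
    ((walkMax c q - q - 1 : ℤ) : ZMod n) ≠ ((walk c m + 1 : ℤ) : ZMod n) := by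
  intro h
  have := Finset.mem_Icc.1 (walk_mem_Icc c hm)
  have := Int.eq_of_cast_zmod_eq h (by omega) (by omega)
  omega

/-- The last step of the walk is forced modulo `n`, so the padding value is immaterial. -/
def padBits (b : Fin (n - 2) → Bool) (p : ℕ) : Bool :=
  if h : p < n - 2 then b ⟨p, h⟩ else true

lemma walk_injective_mod [NeZero n] (c : ℕ → Bool) :
    Function.Injective fun p : Fin n => ((walk c p : ℤ) : ZMod n) := by
  intro p q hpq
  have := NeZero.pos n
  have hp := Finset.mem_Icc.1 (walk_mem_Icc c (p := n - 1) (m := p) (by omega))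
  have hq := Finset.mem_Icc.1 (walk_mem_Icc c (p := n - 1) (m := q) (by omega))
  have heq : walk c p = walk c q := Int.eq_of_cast_zmod_eq hpq (by omega) (by omega)
  exact Fin.ext (walk_injOn c (n - 1) (by simp; omega) (by simp; omega) heq)

noncomputable def seqOfBits [NeZero n] (b : Fin (n - 2) → Bool) : KLRSeq n :=
  ⟨fun p => (walk (padBits b) p : ZMod n),
    (walk_injective_mod _).bijective_of_nat_card_le (by simp)⟩

def bitsOf (j : KLRSeq n) (p : Fin (n - 2)) : Bool :=
  decide (∃ m : Fin n, m.val ≤ p.val ∧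
    j.1 ⟨p.val + 1, by have := p.isLt; omega⟩ = j.1 m + 1)

lemma IsAdmissible.apply_succ_eq_or {j : KLRSeq n} (hj : IsAdmissible j) (c : ℕ → Bool)
    {q : ℕ} (hq : q + 1 < n) (hjc : ∀ m : Fin n, m.val ≤ q → j.1 m = walk c m) :
    j.1 ⟨q + 1, hq⟩ = ((walkMax c q + 1 : ℤ) : ZMod n) ∨
      j.1 ⟨q + 1, hq⟩ = ((walkMax c q - q - 1 : ℤ) : ZMod n) := by
  have hne : j.1 ⟨q + 1, hq⟩ ≠ 0 := by
    rw [← hj.apply_zero (by omega)]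
    exact fun h => absurd (j.2.1 h) (by simp [Fin.ext_iff])
  obtain ⟨m, hm, hadj⟩ := hj _ hne
  have hmq : m.val ≤ q := by rw [Fin.lt_def] at hm; simp at hm; omega
  have hwm := Finset.mem_Icc.1 (walk_mem_Icc c hmq)
  obtain ⟨w, hw, hjw⟩ :
      ∃ w : ℤ, (w = walk c m + 1 ∨ w = walk c m - 1) ∧ j.1 ⟨q + 1, hq⟩ = w := by
    rw [hjc m hmq] at hadj
    rcases hadj with h | h
    · exact ⟨_, Or.inl rfl, by rw [h]; push_cast; rfl⟩
    · exact ⟨_, Or.inr rfl, by push_cast; rw [h]; ring⟩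
  have hout : ¬ (walkMax c q - q ≤ w ∧ w ≤ walkMax c q) := by
    intro hin
    obtain ⟨m', hm', rfl⟩ := exists_walk_eq c (Finset.mem_Icc.2 hin)
    have := j.2.1 ((hjc ⟨m', by omega⟩ hm').trans hjw.symm)
    simp [Fin.ext_iff] at this
    omega
  rw [hjw]
  rcases (by omega : w = walkMax c q + 1 ∨ w = walkMax c q - q - 1) with rfl | rfl
  · exact Or.inl rfl
  · exact Or.inr rfl

lemma bitsOf_eq_true {j : KLRSeq n} (c : ℕ → Bool) {q : ℕ} (hq : q < n - 2)
    (hjc : ∀ m : Fin n, m.val ≤ q → j.1 m = walk c m)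
    (h : j.1 ⟨q + 1, by omega⟩ = ((walkMax c q + 1 : ℤ) : ZMod n)) :
    bitsOf j ⟨q, hq⟩ = true := by
  obtain ⟨m, hm, hwm⟩ := exists_walk_eq c (p := q) (z := walkMax c q) (by simp)
  refine decide_eq_true ⟨⟨m, by omega⟩, hm, ?_⟩
  rw [h, hjc ⟨m, _⟩ hm, hwm]
  push_cast; rfl

lemma bitsOf_eq_false {j : KLRSeq n} (c : ℕ → Bool) {q : ℕ} (hq : q < n - 2)
    (hjc : ∀ m : Fin n, m.val ≤ q → j.1 m = walk c m)
    (h : j.1 ⟨q + 1, by omega⟩ = ((walkMax c q - q - 1 : ℤ) : ZMod n)) :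
    bitsOf j ⟨q, hq⟩ = false := by
  refine decide_eq_false ?_
  rintro ⟨m, hm, hjm⟩
  refine walkMax_sub_ne_walk_add_one (n := n) c (by omega) hm ?_
  rw [← h, hjm, hjc m hm]
  push_cast; rfl

section Bijection

variable [NeZero n]

lemma seqOfBits_apply (b : Fin (n - 2) → Bool) (p : Fin n) :
    (seqOfBits b).1 p = (walk (padBits b) p : ZMod n) := rfl

lemma isAdmissible_seqOfBits (b : Fin (n - 2) → Bool) : IsAdmissible (seqOfBits b) := by
  rintro ⟨_ | q, hq⟩ hne
  · simp [seqOfBits_apply, walk] at hne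
  set c := padBits b
  cases hc : c q
  · obtain ⟨m, hm, hwm⟩ := exists_walk_eq c (p := q) (z := walkMax c q - q) (by simp)
    refine ⟨⟨m, by omega⟩, Fin.lt_def.2 (by simp; omega), Or.inr ?_⟩
    rw [seqOfBits_apply, seqOfBits_apply, walk_succ_of_false c hc, hwm]
    push_cast; ring
  · obtain ⟨m, hm, hwm⟩ := exists_walk_eq c (p := q) (z := walkMax c q) (by simp)
    refine ⟨⟨m, by omega⟩, Fin.lt_def.2 (by simp; omega), Or.inl ?_⟩
    rw [seqOfBits_apply, seqOfBits_apply, walk_succ_of_true c hc, hwm]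
    push_cast; ring

lemma bitsOf_seqOfBits (b : Fin (n - 2) → Bool) : bitsOf (seqOfBits b) = b := by
  funext p
  have hc : padBits b p = b p := dif_pos p.isLt
  have hjc : ∀ m : Fin n, m.val ≤ p → (seqOfBits b).1 m = walk (padBits b) m := fun _ _ => rfl
  cases hb : b p
  · exact bitsOf_eq_false _ p.isLt hjc <| by
      rw [seqOfBits_apply, walk_succ_of_false _ (hc.trans hb)]
  · exact bitsOf_eq_true _ p.isLt hjc <| by
      rw [seqOfBits_apply, walk_succ_of_true _ (hc.trans hb)]

lemma seqOfBits_bitsOf {j : KLRSeq n} (hj : IsAdmissible j) : seqOfBits (bitsOf j) = j := by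
  set c := padBits (bitsOf j)
  suffices h : ∀ q (hq : q < n), (walk c q : ZMod n) = j.1 ⟨q, hq⟩ from
    Subtype.ext (funext fun p => h p.val p.isLt)
  intro q
  induction q using Nat.strong_induction_on with
  | _ q ih =>
  intro hq
  rcases q with _ | q
  · rw [hj.apply_zero hq]
    simp [walk]
  have hjc : ∀ m : Fin n, m.val ≤ q → j.1 m = walk c m :=
    fun m hm => (ih m (by omega) m.isLt).symm
  rcases hj.apply_succ_eq_or c hq hjc with h | h
  · have hcq : c q = true := by
      simp only [c, padBits]
      split_ifs with hq2
      · exact bitsOf_eq_true c hq2 hjc h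
      · rfl
    rw [walk_succ_of_true c hcq, h]
  · by_cases hq2 : q < n - 2
    · have hcq : c q = false := by
        simp only [c, padBits, dif_pos hq2]
        exact bitsOf_eq_false c hq2 hjc h
      rw [walk_succ_of_false c hcq, h]
    · -- the last step: both ends of the arc agree modulo `n`
      have hcq : c q = true := by simp only [c, padBits, dif_neg hq2]
      rw [walk_succ_of_true c hcq, h, ZMod.intCast_eq_intCast_iff_dvd_sub]
      exact ⟨-1, by omega⟩

end Bijection

theorem card_isAdmissible [NeZero n] :
    Nat.card {j : KLRSeq n // IsAdmissible j} = 2 ^ (n - 2) := by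
  let e : (Fin (n - 2) → Bool) ≃ {j : KLRSeq n // IsAdmissible j} :=
    { toFun b := ⟨seqOfBits b, isAdmissible_seqOfBits b⟩
      invFun j := bitsOf j.1
      left_inv := bitsOf_seqOfBits
      right_inv j := Subtype.ext (seqOfBits_bitsOf j.2) }
  rw [← Nat.card_congr e]
  simp

theorem e_ne_zero_iff (K : Type) [Field K] (i : KLRSeq n) : e K i ≠ 0 ↔ IsAdmissible i :=
  ⟨not_imp_comm.1 (e_eq_zero_of_not_isAdmissible K i), e_ne_zero_of_isAdmissible K⟩

end KLR

/-- for `n ≥ 2`, the number of `i ∈ I_n` with `e(i) ≠ 0` in the cyclotomic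
KLR algebra `R_n` is exactly `2^(n−2)`. -/
theorem stmt_0 (K : Type) [Field K] (n : ℕ) (hn : 2 ≤ n) :
    Nat.card {i : KLRSeq n // KLR.e K i ≠ 0} = 2 ^ (n - 2) := by
  have : NeZero n := ⟨by omega⟩
  rw [Nat.card_congr (Equiv.subtypeEquivRight (KLR.e_ne_zero_iff K)), KLR.card_isAdmissible]
end

section
/- Let n > 2. If i ∈ I_n satisfies i_1 = 0 and i_2 ∉ {1, n−1} (as elements of ℤ/nℤ), then e(i) = 0 in the cyclotomic KLR algebra R_n. -/
open scoped BigOperators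

/-- for `n > 2`, if `i ∈ I_n` has `i_1 = 0` and `i_2 ∉ {1, n−1}` in `ZMod n`,
then `e(i) = 0` in the cyclotomic KLR algebra `R_n`. -/
theorem stmt_2 (K : Type) [Field K] (n : ℕ) (hn : 2 < n) (i : KLRSeq n)
    (h1 : i.1 ⟨0, by omega⟩ = 0)
    (h2 : i.1 ⟨1, by omega⟩ ≠ 1 ∧ i.1 ⟨1, by omega⟩ ≠ ((n - 1 : ℕ) : ZMod n)) :
    KLR.e K i = 0 := by
  have hn0 : 0 < n := by omega
  have hk : 0 < n - 1 := by omega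
  set k : Fin (n-1) := ⟨0, hk⟩ with hkdef
  have hpos0 : KLR.pos0 k = (⟨0, hn0⟩ : Fin n) := rfl
  have hpos1 : KLR.pos1 k = (⟨1, by omega⟩ : Fin n) := rfl
  have hswap : (KLR.swapSeq k i).1 ⟨0, hn0⟩ = i.1 ⟨1, by omega⟩ := by
    show i.1 (Equiv.swap (KLR.pos0 k) (KLR.pos1 k) ⟨0, hn0⟩) = _
    rw [hpos0, hpos1, Equiv.swap_apply_left]
  have hb0 : i.1 ⟨1, by omega⟩ ≠ 0 := by
    intro h
    have := i.2.1 (h.trans h1.symm)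
    simp [Fin.ext_iff] at this
  have hesw : KLR.e K (KLR.swapSeq k i) = 0 := by
    have := RingQuot.mkAlgHom_rel K (KLR.Rel.cyc1 (K:=K) hn0 (KLR.swapSeq k i)
      (by rw [hswap]; exact hb0))
    simpa [KLR.e, KLR.mk] using this
  have hpe : KLR.mk K n (KLR.P K k * KLR.E K i) = 0 := by
    have := RingQuot.mkAlgHom_rel K (KLR.Rel.psie (K:=K) k i)
    rw [show RingQuot.mkAlgHom K (KLR.Rel K n) = KLR.mk K n from rfl] at this
    rw [this, map_mul]
    have : KLR.mk K n (KLR.E K (KLR.swapSeq k i)) = 0 := hesw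
    rw [this, zero_mul]
  have hneg : ((n - 1 : ℕ) : ZMod n) = -1 := by
    have : ((n : ℕ) : ZMod n) = 0 := ZMod.natCast_self n
    rw [Nat.cast_sub (by omega), this]
    ring
  have ha : i.1 (KLR.pos0 k) = 0 := h1
  have hb : i.1 (KLR.pos1 k) = i.1 ⟨1, by omega⟩ := rfl
  have hb1 : ¬ (i.1 (KLR.pos1 k) = i.1 (KLR.pos0 k) + 1) := by
    rw [ha, hb, zero_add]; exact h2.1
  have hbm : ¬ (i.1 (KLR.pos0 k) = i.1 (KLR.pos1 k) + 1) := by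
    rw [ha, hb]
    intro h
    apply h2.2
    rw [hneg]
    linear_combination -h
  have c1 : ¬(i.1 (KLR.pos1 k) = i.1 (KLR.pos0 k) + 1 ∧
      i.1 (KLR.pos0 k) = i.1 (KLR.pos1 k) + 1) := fun h => hb1 h.1
  have c2 : ¬(i.1 (KLR.pos1 k) = i.1 (KLR.pos0 k) + 1 ∧
      i.1 (KLR.pos0 k) ≠ i.1 (KLR.pos1 k) + 1) := fun h => hb1 h.1
  have c3 : ¬(i.1 (KLR.pos0 k) = i.1 (KLR.pos1 k) + 1 ∧
      i.1 (KLR.pos1 k) ≠ i.1 (KLR.pos0 k) + 1) := fun h => hbm h.1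
  have hquad : KLR.quadTerm K k i = KLR.E K i := by
    simp only [KLR.quadTerm, c1, c2, c3, if_false]
  have hsq := RingQuot.mkAlgHom_rel K (KLR.Rel.sq (K:=K) k i)
  rw [show RingQuot.mkAlgHom K (KLR.Rel K n) = KLR.mk K n from rfl, hquad] at hsq
  rw [show KLR.e K i = _ from hsq.symm, map_mul, hpe, mul_zero]
end

section
/- Let n ≥ 2. The number of admissible sequences i = (i_1,…,i_n) is exactly 2^(n−2) (interpreted as 1 when n = 2). -/
/-- A sequence `(i_1,…,i_n)` of elements of `ZMod n`, encoded as `f : Fin n → ZMod n`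
(0-based positions), is *admissible* if it is a permutation of `(0,1,…,n−1)`, its first
entry is `0`, and every later entry is a neighbor (in the cycle `ZMod n`) of some earlier
entry. -/
def Admissible (n : ℕ) (f : Fin n → ZMod n) : Prop :=
  Function.Bijective f ∧
  (∀ h : 0 < n, f ⟨0, h⟩ = 0) ∧
  ∀ k : Fin n, 1 ≤ k.val → ∃ l : Fin n, l < k ∧ (f k = f l + 1 ∨ f k = f l - 1)

namespace Stmt4

def s (b : ℕ → Bool) : ℕ → ℤ
  | 0 => 0
  | k + 1 => s b k + (if b k then 1 else 0)

def v (b : ℕ → Bool) : ℕ → ℤ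
  | 0 => 0
  | k + 1 => if b k then s b k + 1 else s b k - k - 1

lemma s_zero (b : ℕ → Bool) : s b 0 = 0 := rfl
lemma s_succ (b : ℕ → Bool) (k : ℕ) : s b (k+1) = s b k + (if b k then 1 else 0) := rfl
lemma v_zero (b : ℕ → Bool) : v b 0 = 0 := rfl
lemma v_succ (b : ℕ → Bool) (k : ℕ) :
    v b (k+1) = if b k then s b k + 1 else s b k - k - 1 := rfl

lemma s_bounds (b : ℕ → Bool) (k : ℕ) : 0 ≤ s b k ∧ s b k ≤ k := by
  induction k with
  | zero => simp [s_zero]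
  | succ k ih => rw [s_succ]; split <;> push_cast <;> omega

lemma s_succ_bounds (b : ℕ → Bool) (k : ℕ) :
    s b k ≤ s b (k+1) ∧ s b (k+1) ≤ s b k + 1 := by
  rw [s_succ]; split <;> omega

lemma s_mono (b : ℕ → Bool) {j k : ℕ} (h : j ≤ k) :
    s b j ≤ s b k ∧ s b k - k ≤ s b j - j := by
  induction k with
  | zero => have : j = 0 := by omega
            subst this; omega
  | succ k ih =>
    rcases Nat.lt_or_ge j (k+1) with h' | h'
    · have h1 := ih (by omega)
      have h2 := s_succ_bounds b k
      push_cast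
      omega
    · have : j = k + 1 := by omega
      subst this; omega

lemma v_bounds (b : ℕ → Bool) (k : ℕ) : s b k - k ≤ v b k ∧ v b k ≤ s b k := by
  cases k with
  | zero => simp [v_zero, s_zero]
  | succ k =>
    by_cases hb : b k <;> simp only [v_succ, s_succ, hb, if_true, if_false] <;>
      push_cast <;> omega

lemma v_mem (b : ℕ → Bool) {j k : ℕ} (hj : j ≤ k) :
    s b k - k ≤ v b j ∧ v b j ≤ s b k := by
  have h1 := v_bounds b j
  have h2 := s_mono b hj
  omega

lemma v_surj (b : ℕ → Bool) (k : ℕ) :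
    ∀ x : ℤ, s b k - k ≤ x → x ≤ s b k → ∃ j ≤ k, v b j = x := by
  induction k with
  | zero =>
    intro x h1 h2
    refine ⟨0, le_rfl, ?_⟩
    rw [v_zero]
    simp [s_zero] at h1 h2
    omega
  | succ k ih =>
    intro x h1 h2
    by_cases hb : b k
    · have hs : s b (k+1) = s b k + 1 := by rw [s_succ, if_pos hb]
      rcases Nat.lt_or_ge 0 1 with _ | _
      · by_cases hx : x ≤ s b k
        · obtain ⟨j, hj, hvj⟩ := ih x (by push_cast at h1 ⊢; omega) hx
          exact ⟨j, by omega, hvj⟩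
        · refine ⟨k+1, le_rfl, ?_⟩
          rw [v_succ, if_pos hb]
          omega
      · omega
    · have hs : s b (k+1) = s b k := by rw [s_succ, if_neg hb]; simp
      by_cases hx : s b k - k ≤ x
      · obtain ⟨j, hj, hvj⟩ := ih x hx (by omega)
        exact ⟨j, by omega, hvj⟩
      · refine ⟨k+1, le_rfl, ?_⟩
        rw [v_succ, if_neg hb]
        push_cast at h1 ⊢
        omega

lemma v_inj (b : ℕ → Bool) : Function.Injective (v b) := by
  have key : ∀ j k : ℕ, j < k → v b j ≠ v b k := by
    intro j k hjk
    cases k with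
    | zero => omega
    | succ k =>
      have hm := v_mem b (show j ≤ k by omega)
      by_cases hb : b k <;> rw [v_succ] <;> simp only [hb, if_true, if_false] <;> omega
  intro j k h
  rcases lt_trichotomy j k with h' | h' | h'
  · exact absurd h (key j k h')
  · exact h'
  · exact absurd h.symm (key k j h')

section N

variable {n : ℕ}

lemma cast_inj_int (hn : 2 ≤ n) {x y : ℤ} (hxy : |x - y| < n)
    (h : ((x : ZMod n) = (y : ZMod n))) : x = y := by
  have h1 := (ZMod.intCast_eq_intCast_iff x y n).1 h
  have h2 : (n : ℤ) ∣ y - x := Int.ModEq.dvd h1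
  have := Int.eq_zero_of_abs_lt_dvd h2 (by rw [abs_sub_comm] at hxy; exact hxy)
  omega

def F (n : ℕ) (b : ℕ → Bool) : Fin n → ZMod n := fun k => ((v b k.val : ℤ) : ZMod n)

lemma F_inj (hn : 2 ≤ n) (b : ℕ → Bool) : Function.Injective (F n b) := by
  intro i j h
  have hi := v_mem b (show i.val ≤ n - 1 by omega)
  have hj := v_mem b (show j.val ≤ n - 1 by omega)
  have habs : |v b i.val - v b j.val| < n := by
    rw [abs_lt]
    have h2 := s_bounds b (n-1)
    push_cast
    omega
  have := cast_inj_int hn habs h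
  exact Fin.ext (v_inj b this)

lemma F_bij (hn : 2 ≤ n) (b : ℕ → Bool) : Function.Bijective (F n b) := by
  haveI : NeZero n := ⟨by omega⟩
  rw [Fintype.bijective_iff_injective_and_card]
  exact ⟨F_inj hn b, by simp [ZMod.card]⟩

lemma F_admissible (hn : 2 ≤ n) (b : ℕ → Bool) : Admissible n (F n b) := by
  refine ⟨F_bij hn b, fun h => by simp [F, v_zero], ?_⟩
  intro k hk
  obtain ⟨k', hk'⟩ : ∃ k', k.val = k' + 1 := ⟨k.val - 1, by omega⟩
  have hk'n : k' + 1 < n := by rw [← hk']; exact k.isLt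
  by_cases hb : b k'
  · obtain ⟨l, hl, hvl⟩ := v_surj b k' (s b k') (by have := s_bounds b k'; omega) le_rfl
    refine ⟨⟨l, by omega⟩, by rw [Fin.lt_def]; simp; omega, Or.inl ?_⟩
    simp only [F, hk', v_succ, hb, if_true, hvl]
    push_cast; ring
  · obtain ⟨l, hl, hvl⟩ := v_surj b k' (s b k' - k') le_rfl (by have := s_bounds b k'; omega)
    refine ⟨⟨l, by omega⟩, by rw [Fin.lt_def]; simp; omega, Or.inr ?_⟩
    simp only [F, hk', v_succ, hb, if_false, hvl]
    push_cast; ring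


def dec (n : ℕ) (f : Fin n → ZMod n) (j : ℕ) : Bool :=
  if h : j + 2 < n then
    decide (∃ l : Fin n, l.val ≤ j ∧ f ⟨j + 1, by omega⟩ = f l + 1)
  else true

lemma main (hn : 2 ≤ n) {f : Fin n → ZMod n} (hf : Admissible n f) :
    ∀ k, ∀ hk : k < n, f ⟨k, hk⟩ = ((v (dec n f) k : ℤ) : ZMod n) := by
  intro k
  induction k using Nat.strong_induction_on with
  | _ k IH =>
    intro hk
    cases k with
    | zero => rw [hf.2.1 hk]; simp [v_zero]
    | succ k' =>
      set B := dec n f with hB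
      obtain ⟨l, hlk, hcase⟩ := hf.2.2 ⟨k'+1, hk⟩ (by simp)
      have hl' : l.val ≤ k' := by rw [Fin.lt_def] at hlk; simpa using Nat.lt_succ_iff.mp hlk
      have hfl : ∀ (m : Fin n), m.val ≤ k' → f m = ((v B m.val : ℤ) : ZMod n) := by
        intro m hm
        have e : m = (⟨m.val, by omega⟩ : Fin n) := Fin.ext rfl
        rw [e]
        exact IH m.val (by omega) (by omega)
      have hinj := hf.1.1
      have hsb := s_bounds B k'
      have Hplus : ∀ m : Fin n, m.val ≤ k' → f ⟨k'+1, hk⟩ = f m + 1 →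
          f ⟨k'+1, hk⟩ = ((s B k' + 1 : ℤ) : ZMod n) := by
        intro m hm he
        have hvm := v_mem B hm
        rcases eq_or_lt_of_le hvm.2 with heq | hlt
        · rw [he, hfl m hm, heq]; push_cast; ring
        · exfalso
          obtain ⟨j, hj, hvj⟩ := v_surj B k' (v B m.val + 1) (by omega) (by omega)
          have hjn : j < n := by omega
          have heq2 : f ⟨k'+1, hk⟩ = f ⟨j, hjn⟩ := by
            rw [he, hfl m hm, hfl ⟨j, hjn⟩ hj]
            simp only [hvj]
            push_cast; ring
          have := hinj heq2
          simp only [Fin.mk.injEq] at this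
          omega
      have Hminus : ∀ m : Fin n, m.val ≤ k' → f ⟨k'+1, hk⟩ = f m - 1 →
          f ⟨k'+1, hk⟩ = ((s B k' - k' - 1 : ℤ) : ZMod n) := by
        intro m hm he
        have hvm := v_mem B hm
        rcases eq_or_lt_of_le hvm.1 with heq | hlt
        · rw [he, hfl m hm, ← heq]; push_cast; ring
        · exfalso
          obtain ⟨j, hj, hvj⟩ := v_surj B k' (v B m.val - 1) (by omega) (by omega)
          have hjn : j < n := by omega
          have heq2 : f ⟨k'+1, hk⟩ = f ⟨j, hjn⟩ := by
            rw [he, hfl m hm, hfl ⟨j, hjn⟩ hj]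
            simp only [hvj]
            push_cast; ring
          have := hinj heq2
          simp only [Fin.mk.injEq] at this
          omega
      rcases hcase with he | he
      · have hb : B k' = true := by
          rw [hB]
          unfold dec
          by_cases h2 : k' + 2 < n
          · rw [dif_pos h2]
            exact decide_eq_true ⟨l, hl', he⟩
          · rw [dif_neg h2]
        rw [v_succ, if_pos hb]
        exact Hplus l hl' he
      · have hfk := Hminus l hl' he
        by_cases hb : B k' = true
        · rw [v_succ, if_pos hb]
          by_cases h2 : k' + 2 < n
          · have hex : ∃ m : Fin n, m.val ≤ k' ∧ f ⟨k'+1, by omega⟩ = f m + 1 := by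
              rw [hB] at hb
              unfold dec at hb
              rw [dif_pos h2] at hb
              exact of_decide_eq_true hb
            obtain ⟨m, hm, he'⟩ := hex
            exact Hplus m hm he'
          · have hn2 : (k' : ℤ) + 2 = n := by push_cast; omega
            rw [hfk]
            have : ((s B k' - k' - 1 : ℤ) : ZMod n) =
                ((s B k' + 1 : ℤ) : ZMod n) - ((n : ℤ) : ZMod n) := by
              rw [← Int.cast_sub]
              congr 1
              omega
            rw [this]
            simp
        · simp only [Bool.not_eq_true] at hb
          rw [v_succ, hb]
          simpa using hfk

lemma dec_F (hn : 2 ≤ n) (b : ℕ → Bool) {j : ℕ} (hj : j + 2 < n) :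
    dec n (F n b) j = b j := by
  unfold dec
  rw [dif_pos hj]
  by_cases hb : b j
  · rw [hb]
    obtain ⟨l, hl, hvl⟩ := v_surj b j (s b j) (by have := s_bounds b j; omega) le_rfl
    refine decide_eq_true ⟨⟨l, by omega⟩, hl, ?_⟩
    simp only [F, v_succ, hb, if_true, hvl]
    push_cast; ring
  · simp only [Bool.not_eq_true] at hb
    rw [hb]
    rw [decide_eq_false_iff_not]
    rintro ⟨l, hl, he⟩
    have h1 := v_mem b (show l.val ≤ j from hl)
    have hv : v b (j+1) = s b j - j - 1 := by rw [v_succ, hb]; simp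
    have h2 : ((v b (j+1) : ℤ) : ZMod n) = ((v b l.val + 1 : ℤ) : ZMod n) := by
      simp only [F] at he
      push_cast
      exact he
    have h3 : v b (j+1) = v b l.val + 1 := by
      refine cast_inj_int hn ?_ h2
      rw [abs_lt]
      push_cast
      omega
    omega

def ext (n : ℕ) (b : Fin (n-2) → Bool) : ℕ → Bool :=
  fun j => if h : j < n - 2 then b ⟨j, h⟩ else true

end N

end Stmt4

open Stmt4 in
/-- for `n ≥ 2`, the number of admissible sequences is exactly `2^(n−2)`. -/
theorem stmt_4 (n : ℕ) (hn : 2 ≤ n) :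
    Nat.card {f : Fin n → ZMod n // Admissible n f} = 2 ^ (n - 2) := by
  have e : {f : Fin n → ZMod n // Admissible n f} ≃ (Fin (n-2) → Bool) :=
    { toFun := fun f => fun j => dec n f.1 j.val
      invFun := fun b => ⟨F n (ext n b), F_admissible hn _⟩
      left_inv := by
        rintro ⟨f, hf⟩
        apply Subtype.ext
        have hext : ext n (fun j : Fin (n-2) => dec n f j.val) = dec n f := by
          funext j
          unfold ext
          split
          · rfl
          · unfold dec
            rw [dif_neg (by omega)]
        simp only
        rw [hext]
        funext k
        have h := main hn hf k.val k.isLt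
        have ek : k = (⟨k.val, k.isLt⟩ : Fin n) := Fin.ext rfl
        show ((v (dec n f) k.val : ℤ) : ZMod n) = f k
        rw [ek]
        exact h.symm
      right_inv := by
        intro b
        funext j
        have hj : j.val + 2 < n := by omega
        simp only
        rw [dec_F hn (ext n b) hj]
        unfold ext
        rw [dif_pos j.isLt] }
  rw [Nat.card_congr e, Nat.card_fun]
  simp
end

section
/- Let n ≥ 3 and let i = (i_1,…,i_n) be an admissible sequence. Then for every k with 2 ≤ k ≤ n−1 there is exactly one index l < k such that i_k = i_l + 1 or i_k = i_l − 1 in ℤ/nℤ, while for k = n there are exactly two such indices l < n. -/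
private lemma castEq {n : ℕ} {t1 t2 : ℤ} (h : (t1 : ZMod n) = (t2 : ZMod n)) :
    (n : ℤ) ∣ t2 - t1 :=
  ((ZMod.intCast_eq_intCast_iff _ _ _).1 h).dvd

private lemma castNe {n : ℕ} {t1 t2 : ℤ} (h1 : t1 < t2) (h2 : t2 - t1 < n) :
    (t1 : ZMod n) ≠ (t2 : ZMod n) := by
  intro h
  have d := castEq h
  have := Int.le_of_dvd (by omega) d
  omega

private lemma neighborCases {n a b : ℕ} {x y : ZMod n}
    (hy : y ∈ (fun t : ℤ => (t : ZMod n)) '' Set.Icc (-(a : ℤ)) (b : ℤ))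
    (hx : x ∉ (fun t : ℤ => (t : ZMod n)) '' Set.Icc (-(a : ℤ)) (b : ℤ))
    (hxy : x = y + 1 ∨ x = y - 1) :
    (y = ((b : ℤ) : ZMod n) ∧ x = (((b : ℤ) + 1 : ℤ) : ZMod n)) ∨
    (y = ((-(a : ℤ)) : ZMod n) ∧ x = (((-(a : ℤ)) - 1 : ℤ) : ZMod n)) := by
  obtain ⟨t, ht, rfl⟩ := hy
  obtain ⟨ht1, ht2⟩ := Set.mem_Icc.1 ht
  rcases hxy with rfl | rfl
  · left
    have htb : t = b := by
      by_contra hne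
      exact hx ⟨t + 1, Set.mem_Icc.2 ⟨by omega, by omega⟩, by push_cast; ring⟩
    subst htb
    exact ⟨rfl, by push_cast; ring⟩
  · right
    have hta : t = -(a : ℤ) := by
      by_contra hne
      exact hx ⟨t - 1, Set.mem_Icc.2 ⟨by omega, by omega⟩, by push_cast; ring⟩
    subst hta
    exact ⟨by push_cast; ring, by push_cast; ring⟩

private lemma arc {n : ℕ} (f : Fin n → ZMod n) (hf : Admissible n f) :
    ∀ m : ℕ, 1 ≤ m → m ≤ n → ∃ a b : ℕ, a + b + 1 = m ∧
      f '' {l : Fin n | l.val < m} =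
        (fun t : ℤ => (t : ZMod n)) '' Set.Icc (-(a : ℤ)) (b : ℤ) := by
  intro m hm
  induction m, hm using Nat.le_induction with
  | base =>
    intro hmn
    refine ⟨0, 0, rfl, ?_⟩
    have h0 : ({l : Fin n | l.val < 1} : Set (Fin n)) = {(⟨0, by omega⟩ : Fin n)} := by
      ext l
      simp [Fin.ext_iff]
    rw [h0, Set.image_singleton, hf.2.1 (by omega)]
    norm_num
  | succ m hm ih =>
    intro hmn
    obtain ⟨a, b, hab, hS⟩ := ih (by omega)
    set k : Fin n := ⟨m, by omega⟩ with hk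
    have hkv : (k : ℕ) = m := rfl
    obtain ⟨l, hlk, hnb⟩ := hf.2.2 k (by rw [hkv]; omega)
    have hlm : l.val < m := hlk
    have hfl : f l ∈ (fun t : ℤ => (t : ZMod n)) '' Set.Icc (-(a : ℤ)) (b : ℤ) := by
      rw [← hS]; exact ⟨l, hlm, rfl⟩
    have hfk : f k ∉ (fun t : ℤ => (t : ZMod n)) '' Set.Icc (-(a : ℤ)) (b : ℤ) := by
      rw [← hS]
      rintro ⟨l', hl', he⟩
      have : l' = k := hf.1.1 he
      subst this
      have h2 : (k : ℕ) < m := hl'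
      omega
    have hset : {l : Fin n | l.val < m + 1} = {l : Fin n | l.val < m} ∪ {k} := by
      ext l
      simp [hk, Fin.ext_iff]
      omega
    rcases neighborCases hfl hfk hnb with ⟨_, hx⟩ | ⟨_, hx⟩
    · refine ⟨a, b + 1, by omega, ?_⟩
      have hIcc : Set.Icc (-(a : ℤ)) (((b + 1 : ℕ) : ℤ)) =
          Set.Icc (-(a : ℤ)) (b : ℤ) ∪ {(b : ℤ) + 1} := by
        ext t; simp only [Set.mem_Icc, Set.mem_union, Set.mem_singleton_iff]; push_cast; omega
      rw [hset, Set.image_union, Set.image_singleton, hS, hx, hIcc, Set.image_union,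
        Set.image_singleton]
    · refine ⟨a + 1, b, by omega, ?_⟩
      have hIcc : Set.Icc (-((a + 1 : ℕ) : ℤ)) (b : ℤ) =
          Set.Icc (-(a : ℤ)) (b : ℤ) ∪ {-(a : ℤ) - 1} := by
        ext t; simp only [Set.mem_Icc, Set.mem_union, Set.mem_singleton_iff]; push_cast; omega
      rw [hset, Set.image_union, Set.image_singleton, hS, hx, hIcc, Set.image_union,
        Set.image_singleton]

/-- for `n ≥ 3` and an admissible sequence `i`, each entry at a (1-based)
position `2 ≤ k ≤ n−1` has exactly one earlier neighbor in the cycle `ZMod n`, while the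
last entry has exactly two earlier neighbors. -/
theorem stmt_5 (n : ℕ) (hn : 3 ≤ n) (f : Fin n → ZMod n) (hf : Admissible n f) :
    (∀ k : Fin n, 1 ≤ k.val → k.val ≤ n - 2 →
      ∃! l : Fin n, l < k ∧ (f k = f l + 1 ∨ f k = f l - 1)) ∧
    {l : Fin n | l < (⟨n - 1, by omega⟩ : Fin n) ∧
        (f ⟨n - 1, by omega⟩ = f l + 1 ∨ f ⟨n - 1, by omega⟩ = f l - 1)}.ncard = 2 := by
  constructor
  · intro k hk1 hk2
    obtain ⟨a, b, hab, hS⟩ := arc f hf k.val hk1 (by omega)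
    have hfk : f k ∉ (fun t : ℤ => (t : ZMod n)) '' Set.Icc (-(a : ℤ)) (b : ℤ) := by
      rw [← hS]
      rintro ⟨l', hl', he⟩
      have he2 : l' = k := hf.1.1 he
      rw [he2] at hl'
      have h2 : (k : ℕ) < (k : ℕ) := hl'
      omega
    have hmem : ∀ l : Fin n, l < k →
        f l ∈ (fun t : ℤ => (t : ZMod n)) '' Set.Icc (-(a : ℤ)) (b : ℤ) := by
      intro l hl
      rw [← hS]; exact ⟨l, hl, rfl⟩
    obtain ⟨l0, hl0, hnb0⟩ := hf.2.2 k hk1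
    refine ⟨l0, ⟨hl0, hnb0⟩, ?_⟩
    rintro l' ⟨hl', hnb'⟩
    have hne : (((-(a : ℤ)) - 1 : ℤ) : ZMod n) ≠ (((b : ℤ) + 1 : ℤ) : ZMod n) :=
      castNe (by omega) (by omega)
    rcases neighborCases (hmem l' hl') hfk hnb' with ⟨hy', hx'⟩ | ⟨hy', hx'⟩ <;>
      rcases neighborCases (hmem l0 hl0) hfk hnb0 with ⟨hy0, hx0⟩ | ⟨hy0, hx0⟩
    · exact hf.1.1 (hy'.trans hy0.symm)
    · exact absurd (hx0.symm.trans hx') hne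
    · exact absurd (hx'.symm.trans hx0) hne
    · exact hf.1.1 (hy'.trans hy0.symm)
  · set k : Fin n := ⟨n - 1, by omega⟩ with hk
    have hkv : (k : ℕ) = n - 1 := rfl
    obtain ⟨a, b, hab, hS⟩ := arc f hf (n - 1) (by omega) (by omega)
    have hfk : f k ∉ (fun t : ℤ => (t : ZMod n)) '' Set.Icc (-(a : ℤ)) (b : ℤ) := by
      rw [← hS]
      rintro ⟨l', hl', he⟩
      have he2 : l' = k := hf.1.1 he
      rw [he2] at hl'
      have h2 : n - 1 < n - 1 := hl'
      omega
    have hmem : ∀ l : Fin n, l < k →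
        f l ∈ (fun t : ℤ => (t : ZMod n)) '' Set.Icc (-(a : ℤ)) (b : ℤ) := by
      intro l hl
      rw [← hS]; exact ⟨l, hl, rfl⟩
    -- the two endpoints
    obtain ⟨l1, hl1m, hl1⟩ : ∃ l1 : Fin n, l1.val < n - 1 ∧ f l1 = ((b : ℤ) : ZMod n) := by
      have : ((b : ℤ) : ZMod n) ∈ f '' {l : Fin n | l.val < n - 1} := by
        rw [hS]; exact ⟨b, Set.mem_Icc.2 ⟨by omega, le_refl _⟩, rfl⟩
      obtain ⟨l1, h1, h2⟩ := this
      exact ⟨l1, h1, h2⟩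
    obtain ⟨l2, hl2m, hl2⟩ : ∃ l2 : Fin n, l2.val < n - 1 ∧ f l2 = ((-(a : ℤ)) : ZMod n) := by
      have : ((-(a : ℤ)) : ZMod n) ∈ f '' {l : Fin n | l.val < n - 1} := by
        rw [hS]; exact ⟨-(a : ℤ), Set.mem_Icc.2 ⟨le_refl _, by omega⟩, by push_cast; ring⟩
      obtain ⟨l2, h1, h2⟩ := this
      exact ⟨l2, h1, h2⟩
    have hl1k : l1 < k := hl1m
    have hl2k : l2 < k := hl2m
    -- f k equals both b+1 and -a-1
    obtain ⟨l0, hl0, hnb0⟩ := hf.2.2 k (by rw [hkv]; omega)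
    have heq : (((b : ℤ) + 1 : ℤ) : ZMod n) = (((-(a : ℤ)) - 1 : ℤ) : ZMod n) := by
      have : ((n : ℤ) : ZMod n) = 0 := by
        simp
      rw [ZMod.intCast_eq_intCast_iff]
      have : ((b : ℤ) + 1) - ((-(a : ℤ)) - 1) = (n : ℤ) := by omega
      exact Int.ModEq.symm (Int.modEq_iff_dvd.2 (by rw [this]))
    have hfk1 : f k = (((b : ℤ) + 1 : ℤ) : ZMod n) := by
      rcases neighborCases (hmem l0 hl0) hfk hnb0 with ⟨_, hx⟩ | ⟨_, hx⟩
      · exact hx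
      · exact hx.trans heq.symm
    have hfk2 : f k = (((-(a : ℤ)) - 1 : ℤ) : ZMod n) := hfk1.trans heq
    have hset : {l : Fin n | l < k ∧ (f k = f l + 1 ∨ f k = f l - 1)} = {l1, l2} := by
      ext l
      simp only [Set.mem_setOf_eq, Set.mem_insert_iff, Set.mem_singleton_iff]
      constructor
      · rintro ⟨hl, hnb⟩
        rcases neighborCases (hmem l hl) hfk hnb with ⟨hy, _⟩ | ⟨hy, _⟩
        · exact Or.inl (hf.1.1 (hy.trans hl1.symm))
        · exact Or.inr (hf.1.1 (hy.trans hl2.symm))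
      · rintro (rfl | rfl)
        · exact ⟨hl1k, Or.inl (by rw [hl1, hfk1]; push_cast; ring)⟩
        · exact ⟨hl2k, Or.inr (by rw [hl2, hfk2]; push_cast; ring)⟩
    have hl12 : l1 ≠ l2 := by
      intro h
      rw [h, hl2] at hl1
      have h3 : ((-(a : ℤ) : ℤ) : ZMod n) = (((b : ℤ) : ℤ) : ZMod n) := by
        push_cast at hl1 ⊢
        exact hl1
      exact castNe (t1 := -(a : ℤ)) (t2 := (b : ℤ)) (by omega) (by omega) h3
    calc {l : Fin n | l < (⟨n - 1, by omega⟩ : Fin n) ∧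
        (f ⟨n - 1, by omega⟩ = f l + 1 ∨ f ⟨n - 1, by omega⟩ = f l - 1)}.ncard
        = ({l1, l2} : Set (Fin n)).ncard := by rw [← hset]
      _ = 2 := Set.ncard_pair hl12
end

section
/- Let n ≥ 2 and let k be an integer with 1 ≤ k ≤ n−1. The number of admissible sequences i = (i_1,…,i_n) whose last entry i_n equals k (as an element of ℤ/nℤ) is the binomial coefficient C(n−2, k−1). -/
/-!
Write `n = m + 2` and `k = a + 1`. Before its last step an admissible sequence ending at `k` has
visited a cyclic interval around `0` avoiding `k`, so the values `1, …, k - 1` occur in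
increasing order and the values `n - 1, …, k + 1` in decreasing order. The sequence is therefore
determined by the set of the `a` interior positions carrying the values `1, …, k - 1`, and every
`a`-subset of the `m` interior positions arises in this way.
-/

open Finset

namespace ZMod

variable {n : ℕ}

theorem val_add_one_of_lt {x : ZMod n} (h : x.val + 1 < n) : (x + 1).val = x.val + 1 := by
  have : Fact (1 < n) := ⟨by omega⟩
  rw [val_add_of_lt (by rwa [val_one]), val_one]

theorem val_sub_one_of_pos [NeZero n] {x : ZMod n} (h : 0 < x.val) : (x - 1).val = x.val - 1 := by
  have : Fact (1 < n) := ⟨by have := x.val_lt; omega⟩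
  rw [val_sub (by rwa [val_one]), val_one]

end ZMod

def lowPositions {n : ℕ} (f : Fin n → ZMod n) (c : ℕ) : Finset (Fin n) :=
  {p | 0 < (f p).val ∧ (f p).val < c}

theorem card_lowPositions {n : ℕ} [NeZero n] {f : Fin n → ZMod n} (hf : Function.Bijective f)
    {c : ℕ} (hc : c ≤ n) : (lowPositions f c).card = c - 1 := by
  rw [show c - 1 = (Ioo 0 c).card by simp]
  refine card_bij (fun p _ => (f p).val) (fun p hp => by simpa [lowPositions] using hp)
    (fun p _ q _ h => hf.1 (ZMod.val_injective n h)) fun x hx => ?_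
  obtain ⟨p, hp⟩ := hf.2 x
  rw [mem_Ioo] at hx
  have hxval : (f p).val = x := by rw [hp, ZMod.val_cast_of_lt (by omega)]
  exact ⟨p, by simp only [lowPositions, mem_filter, mem_univ, true_and, hxval]; exact hx, hxval⟩

namespace Admissible

variable {n : ℕ} {f : Fin n → ZMod n}

theorem apply_zero {m : ℕ} {f : Fin (m + 1) → ZMod (m + 1)} (hf : Admissible (m + 1) f) :
    f 0 = 0 :=
  hf.2.1 m.succ_pos

theorem neg (hf : Admissible n f) : Admissible n (-f) := by
  refine ⟨(Equiv.neg _).bijective.comp hf.1, fun h => by simp [hf.2.1 h], fun p hp => ?_⟩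
  obtain ⟨l, hlp, hl | hl⟩ := hf.2.2 p hp
  · exact ⟨l, hlp, Or.inr (by simp [hl]; abel)⟩
  · exact ⟨l, hlp, Or.inl (by simp [hl]; abel)⟩

/-- The earlier neighbour of `f p` cannot be `f p + 1`: by induction that value would need `f p`
to occur before it, unless it is `f e`, which occurs no earlier than `p`. -/
theorem lt_of_val_lt [NeZero n] (hf : Admissible n f) {e p q : Fin n} (hpe : p ≤ e)
    (hqp : (f q).val < (f p).val) (hpe' : (f p).val < (f e).val) : q < p := by
  induction p using WellFoundedLT.induction generalizing q with
  | _ p ih =>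
  have hinj : ∀ {x y : Fin n}, (f x).val = (f y).val → x = y :=
    fun h => hf.1.1 (ZMod.val_injective n h)
  have hp : 1 ≤ p.val := by
    by_contra! h
    have : p = ⟨0, p.pos⟩ := Fin.ext (Nat.lt_one_iff.1 h)
    rw [this, hf.2.1 p.pos, ZMod.val_zero] at hqp
    omega
  obtain ⟨l, hlp, hl | hl⟩ := hf.2.2 p hp
  · have hval : (f l).val = (f p).val - 1 := by
      rw [eq_sub_of_add_eq hl.symm, ZMod.val_sub_one_of_pos (by omega)]
    rcases (show (f q).val ≤ (f l).val by omega).lt_or_eq with h | h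
    · exact (ih l hlp (hlp.le.trans hpe) h (by omega)).trans hlp
    · exact hinj h ▸ hlp
  · have hval : (f l).val = (f p).val + 1 := by
      rw [eq_add_of_sub_eq hl.symm, ZMod.val_add_one_of_lt (by have := (f e).val_lt; omega)]
    rcases (show (f l).val ≤ (f e).val by omega).lt_or_eq with h | h
    · exact absurd (ih l hlp (hlp.le.trans hpe) (by omega) h) hlp.not_gt
    · exact absurd (hinj h ▸ hlp) hpe.not_gt

theorem apply_orderEmbOfFin {m : ℕ} {f : Fin (m + 1) → ZMod (m + 1)} (hf : Admissible (m + 1) f)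
    {S : Finset (Fin (m + 1))}
    (hS : ∀ p, p ∈ S ↔ 0 < (f p).val ∧ (f p).val < (f (Fin.last m)).val)
    {r : ℕ} (h : S.card = r) (hr : r < (f (Fin.last m)).val) (i : Fin r) :
    f (S.orderEmbOfFin h i) = ((i + 1 : ℕ) : ZMod (m + 1)) := by
  obtain ⟨g, hg⟩ := hf.1.2.hasRightInverse
  have hval : ∀ j : Fin r, (f (g ((j + 1 : ℕ) : ZMod (m + 1)))).val = j + 1 := fun j => by
    rw [hg, ZMod.val_cast_of_lt (by have := (f (Fin.last m)).val_lt; omega)]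
  have hemb : (fun j : Fin r => g ((j + 1 : ℕ) : ZMod (m + 1))) = S.orderEmbOfFin h :=
    orderEmbOfFin_unique h (fun j => (hS _).2 (by rw [hval]; omega))
      fun j j' hjj' => hf.lt_of_val_lt (Fin.le_last _)
        (by rw [hval, hval]; exact Nat.succ_lt_succ hjj') (by rw [hval]; omega)
  rw [← hemb, hg]

end Admissible

section Construction

variable {m a : ℕ}

def innerPositions (m : ℕ) : Finset (Fin (m + 2)) := Ioo 0 (Fin.last (m + 1))

theorem card_innerPositions : (innerPositions m).card = m := by
  simp [innerPositions]

variable {T : Finset (Fin (m + 2))}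

theorem zero_notMem_of_mem_powersetCard_innerPositions
    (hT : T ∈ (innerPositions m).powersetCard a) : (0 : Fin (m + 2)) ∉ T :=
  fun h => by simpa [innerPositions] using (mem_powersetCard.1 hT).1 h

theorem last_notMem_of_mem_powersetCard_innerPositions
    (hT : T ∈ (innerPositions m).powersetCard a) : Fin.last (m + 1) ∉ T :=
  fun h => by simpa [innerPositions] using (mem_powersetCard.1 hT).1 h

theorem le_of_mem_powersetCard_innerPositions (hT : T ∈ (innerPositions m).powersetCard a) :
    a ≤ m := by
  rw [mem_powersetCard] at hT
  exact hT.2 ▸ (card_le_card hT.1).trans_eq card_innerPositions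

theorem card_innerPositions_sdiff (hT : T ∈ (innerPositions m).powersetCard a) :
    (innerPositions m \ T).card = m - a := by
  rw [mem_powersetCard] at hT
  rw [card_sdiff_of_subset hT.1, hT.2, card_innerPositions]

/-- Counting from `0`, the `i`-th position in `T` gets the value `i + 1` and the `j`-th interior
position outside `T` the value `m + 1 - j = -(j + 1)`. -/
def ofLowPositions (T : Finset (Fin (m + 2))) (hT : T ∈ (innerPositions m).powersetCard a)
    (p : Fin (m + 2)) : ZMod (m + 2) :=
  if hp : p ∈ T then
    (((T.orderIsoOfFin (mem_powersetCard.1 hT).2).symm ⟨p, hp⟩ + 1 : ℕ) : ZMod (m + 2))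
  else if hq : p ∈ innerPositions m \ T then
    ((m + 1 - ((innerPositions m \ T).orderIsoOfFin (card_innerPositions_sdiff hT)).symm ⟨p, hq⟩
      : ℕ) : ZMod (m + 2))
  else if p = 0 then 0 else ((a + 1 : ℕ) : ZMod (m + 2))

theorem eq_zero_or_eq_last_or_exists_orderEmbOfFin (hT : T ∈ (innerPositions m).powersetCard a)
    (p : Fin (m + 2)) :
    p = 0 ∨ p = Fin.last (m + 1) ∨ (∃ i, T.orderEmbOfFin (mem_powersetCard.1 hT).2 i = p) ∨
      ∃ j, (innerPositions m \ T).orderEmbOfFin (card_innerPositions_sdiff hT) j = p := by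
  by_cases hpT : p ∈ T
  · exact Or.inr (Or.inr (Or.inl (by rw [← Set.mem_range, range_orderEmbOfFin]; exact hpT)))
  by_cases hpU : p ∈ innerPositions m \ T
  · exact Or.inr (Or.inr (Or.inr (by rw [← Set.mem_range, range_orderEmbOfFin]; exact hpU)))
  have hp : p ∉ innerPositions m := fun h => hpU (mem_sdiff.2 ⟨h, hpT⟩)
  simp only [innerPositions, mem_Ioo, Fin.pos_iff_ne_zero', Fin.lt_last_iff_ne_last, not_and_or,
    not_not] at hp
  tauto

theorem ofLowPositions_zero (hT : T ∈ (innerPositions m).powersetCard a) :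
    ofLowPositions T hT 0 = 0 := by
  simp [ofLowPositions, zero_notMem_of_mem_powersetCard_innerPositions hT, innerPositions]

theorem ofLowPositions_last (hT : T ∈ (innerPositions m).powersetCard a) :
    ofLowPositions T hT (Fin.last (m + 1)) = ((a + 1 : ℕ) : ZMod (m + 2)) := by
  simp [ofLowPositions, last_notMem_of_mem_powersetCard_innerPositions hT, innerPositions]

theorem ofLowPositions_orderEmbOfFin (hT : T ∈ (innerPositions m).powersetCard a) (i : Fin a) :
    ofLowPositions T hT (T.orderEmbOfFin (mem_powersetCard.1 hT).2 i) =
      ((i + 1 : ℕ) : ZMod (m + 2)) := by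
  rw [ofLowPositions, dif_pos (orderEmbOfFin_mem _ _ i)]
  exact congrArg (fun j : Fin a => ((j + 1 : ℕ) : ZMod (m + 2)))
    ((orderIsoOfFin _ _).symm_apply_apply i)

theorem ofLowPositions_orderEmbOfFin_sdiff (hT : T ∈ (innerPositions m).powersetCard a)
    (j : Fin (m - a)) :
    ofLowPositions T hT ((innerPositions m \ T).orderEmbOfFin (card_innerPositions_sdiff hT) j) =
      ((m + 1 - j : ℕ) : ZMod (m + 2)) := by
  have hj := orderEmbOfFin_mem _ (card_innerPositions_sdiff hT) j
  rw [ofLowPositions, dif_neg (mem_sdiff.1 hj).2, dif_pos hj]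
  exact congrArg (fun j : Fin (m - a) => ((m + 1 - j : ℕ) : ZMod (m + 2)))
    ((orderIsoOfFin _ _).symm_apply_apply j)

theorem ofLowPositions_surjective (hT : T ∈ (innerPositions m).powersetCard a) :
    Function.Surjective (ofLowPositions T hT) := by
  intro v
  have hv := v.val_lt
  have ha := le_of_mem_powersetCard_innerPositions hT
  rw [← ZMod.natCast_zmod_val v]
  obtain h0 | hlow | hk | hhigh :
      v.val = 0 ∨ (1 ≤ v.val ∧ v.val ≤ a) ∨ v.val = a + 1 ∨ a + 2 ≤ v.val := by omega
  · exact ⟨0, by rw [ofLowPositions_zero, h0, Nat.cast_zero]⟩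
  · refine ⟨T.orderEmbOfFin (mem_powersetCard.1 hT).2 ⟨v.val - 1, by omega⟩, ?_⟩
    rw [ofLowPositions_orderEmbOfFin, Nat.sub_add_cancel hlow.1]
  · exact ⟨Fin.last _, by rw [ofLowPositions_last, hk]⟩
  · refine ⟨(innerPositions m \ T).orderEmbOfFin (card_innerPositions_sdiff hT)
      ⟨m + 1 - v.val, by omega⟩, ?_⟩
    rw [ofLowPositions_orderEmbOfFin_sdiff]
    congr 1
    dsimp only
    omega

theorem ofLowPositions_exists_neighbour (hT : T ∈ (innerPositions m).powersetCard a)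
    (p : Fin (m + 2)) (hp : 1 ≤ p.val) : ∃ l < p,
      ofLowPositions T hT p = ofLowPositions T hT l + 1 ∨
        ofLowPositions T hT p = ofLowPositions T hT l - 1 := by
  have ha := le_of_mem_powersetCard_innerPositions hT
  have hTin : ∀ i, 0 < T.orderEmbOfFin (mem_powersetCard.1 hT).2 i ∧
      T.orderEmbOfFin (mem_powersetCard.1 hT).2 i < Fin.last (m + 1) := fun i =>
    mem_Ioo.1 ((mem_powersetCard.1 hT).1 (orderEmbOfFin_mem _ _ i))
  have hUin : ∀ j, 0 < (innerPositions m \ T).orderEmbOfFin (card_innerPositions_sdiff hT) j :=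
    fun j => (mem_Ioo.1 (mem_sdiff.1 (orderEmbOfFin_mem _ _ j)).1).1
  rcases eq_zero_or_eq_last_or_exists_orderEmbOfFin hT p with
    rfl | rfl | ⟨⟨i, hi⟩, rfl⟩ | ⟨⟨j, hj⟩, rfl⟩
  · simp at hp
  · rcases Nat.eq_zero_or_pos a with rfl | ha0
    · exact ⟨0, Fin.last_pos, Or.inl (by simp [ofLowPositions_last, ofLowPositions_zero])⟩
    · refine ⟨_, (hTin ⟨a - 1, by omega⟩).2, Or.inl ?_⟩
      rw [ofLowPositions_last, ofLowPositions_orderEmbOfFin]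
      simp only [Nat.sub_add_cancel ha0]
      push_cast
      ring
  · rcases Nat.eq_zero_or_pos i with rfl | hi0
    · exact ⟨0, (hTin _).1,
        Or.inl (by simp [ofLowPositions_orderEmbOfFin, ofLowPositions_zero])⟩
    · refine ⟨_, (T.orderEmbOfFin _).strictMono (show (⟨i - 1, by omega⟩ : Fin a) < ⟨i, hi⟩ from
        Fin.mk_lt_mk.2 (by omega)), Or.inl ?_⟩
      rw [ofLowPositions_orderEmbOfFin, ofLowPositions_orderEmbOfFin]
      simp only [Nat.sub_add_cancel hi0]
      push_cast
      ring
  · rcases Nat.eq_zero_or_pos j with rfl | hj0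
    · refine ⟨0, hUin _, Or.inr ?_⟩
      rw [ofLowPositions_orderEmbOfFin_sdiff, ofLowPositions_zero, zero_sub,
        eq_neg_iff_add_eq_zero, Fin.val_mk, Nat.sub_zero, ← Nat.cast_succ]
      exact ZMod.natCast_self (m + 2)
    · refine ⟨_, ((innerPositions m \ T).orderEmbOfFin _).strictMono
        (show (⟨j - 1, by omega⟩ : Fin (m - a)) < ⟨j, hj⟩ from Fin.mk_lt_mk.2 (by omega)),
        Or.inr ?_⟩
      rw [ofLowPositions_orderEmbOfFin_sdiff, ofLowPositions_orderEmbOfFin_sdiff,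
        eq_sub_iff_add_eq]
      dsimp only
      rw [show m + 1 - (j - 1) = m + 1 - j + 1 by omega, Nat.cast_succ]

theorem admissible_ofLowPositions (hT : T ∈ (innerPositions m).powersetCard a) :
    Admissible (m + 2) (ofLowPositions T hT) :=
  ⟨(Fintype.bijective_iff_surjective_and_card _).2 ⟨ofLowPositions_surjective hT, by simp⟩,
    fun _ => ofLowPositions_zero hT, ofLowPositions_exists_neighbour hT⟩

theorem lowPositions_ofLowPositions (hT : T ∈ (innerPositions m).powersetCard a) :
    lowPositions (ofLowPositions T hT) (a + 1) = T := by
  have ha := le_of_mem_powersetCard_innerPositions hT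
  ext p
  simp only [lowPositions, mem_filter, mem_univ, true_and]
  rcases eq_zero_or_eq_last_or_exists_orderEmbOfFin hT p with
    rfl | rfl | ⟨⟨i, hi⟩, rfl⟩ | ⟨⟨j, hj⟩, rfl⟩
  · simp [ofLowPositions_zero, zero_notMem_of_mem_powersetCard_innerPositions hT]
  · rw [ofLowPositions_last, ZMod.val_cast_of_lt (by omega)]
    simp [last_notMem_of_mem_powersetCard_innerPositions hT]
  · rw [ofLowPositions_orderEmbOfFin, ZMod.val_cast_of_lt (by dsimp only; omega)]
    simp only [orderEmbOfFin_mem, iff_true]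
    omega
  · rw [ofLowPositions_orderEmbOfFin_sdiff, ZMod.val_cast_of_lt (by omega)]
    simp only [(mem_sdiff.1 (orderEmbOfFin_mem _ _ _)).2, iff_false]
    omega

end Construction

section Classification

variable {m a : ℕ} {f : Fin (m + 2) → ZMod (m + 2)}

namespace Admissible

theorem lowPositions_mem_powersetCard (hf : Admissible (m + 2) f)
    (hlast : f (Fin.last (m + 1)) = ((a + 1 : ℕ) : ZMod (m + 2))) (ha : a ≤ m) :
    lowPositions f (a + 1) ∈ (innerPositions m).powersetCard a := by
  refine mem_powersetCard.2 ⟨fun p hp => ?_, card_lowPositions hf.1 (by omega)⟩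
  simp only [lowPositions, mem_filter, mem_univ, true_and] at hp
  rw [innerPositions, mem_Ioo, Fin.pos_iff_ne_zero', Fin.lt_last_iff_ne_last]
  constructor
  · rintro rfl
    simp [hf.apply_zero] at hp
  · rintro rfl
    rw [hlast, ZMod.val_cast_of_lt (by omega)] at hp
    omega

theorem mem_sdiff_lowPositions_iff (hf : Admissible (m + 2) f)
    (hlast : f (Fin.last (m + 1)) = ((a + 1 : ℕ) : ZMod (m + 2))) (ha : a ≤ m) (p : Fin (m + 2)) :
    p ∈ innerPositions m \ lowPositions f (a + 1) ↔
      0 < ((-f) p).val ∧ ((-f) p).val < ((-f) (Fin.last (m + 1))).val := by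
  have hk : (f (Fin.last (m + 1))).val = a + 1 := by rw [hlast, ZMod.val_cast_of_lt (by omega)]
  have h0 : p = 0 ↔ (f p).val = 0 := by
    rw [ZMod.val_eq_zero, ← hf.apply_zero]
    exact hf.1.1.eq_iff.symm
  have hl : p = Fin.last (m + 1) ↔ (f p).val = a + 1 := by
    rw [← hk]
    exact ((ZMod.val_injective _).comp hf.1.1).eq_iff.symm
  have := (f p).val_lt
  simp only [mem_sdiff, innerPositions, lowPositions, mem_Ioo, mem_filter, mem_univ, true_and,
    Fin.pos_iff_ne_zero', Fin.lt_last_iff_ne_last, Pi.neg_apply, ZMod.neg_val,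
    ← ZMod.val_eq_zero, hk, Nat.add_one_ne_zero, if_false]
  rw [Ne, Ne, h0, hl]
  split_ifs <;> omega

theorem eq_ofLowPositions (hf : Admissible (m + 2) f)
    (hlast : f (Fin.last (m + 1)) = ((a + 1 : ℕ) : ZMod (m + 2))) (ha : a ≤ m) :
    f = ofLowPositions (lowPositions f (a + 1)) (hf.lowPositions_mem_powersetCard hlast ha) := by
  set hT := hf.lowPositions_mem_powersetCard hlast ha
  have hk : (f (Fin.last (m + 1))).val = a + 1 := by rw [hlast, ZMod.val_cast_of_lt (by omega)]
  have hk' : ((-f) (Fin.last (m + 1))).val = m + 1 - a := by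
    rw [Pi.neg_apply, ZMod.neg_val, if_neg (fun h => by simp [h] at hk), hk]
    omega
  funext p
  rcases eq_zero_or_eq_last_or_exists_orderEmbOfFin hT p with rfl | rfl | ⟨i, rfl⟩ | ⟨j, rfl⟩
  · rw [ofLowPositions_zero, hf.apply_zero]
  · rw [ofLowPositions_last, hlast]
  · rw [ofLowPositions_orderEmbOfFin,
      hf.apply_orderEmbOfFin (fun p => by simp [lowPositions, hk]) _ (by omega)]
  · -- the high values of `f` are the low values of `-f`
    have hneg := hf.neg.apply_orderEmbOfFin (hf.mem_sdiff_lowPositions_iff hlast ha)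
      (card_innerPositions_sdiff hT) (by omega) j
    rw [Pi.neg_apply, neg_eq_iff_eq_neg] at hneg
    rw [ofLowPositions_orderEmbOfFin_sdiff, hneg, neg_eq_iff_add_eq_zero, ← Nat.cast_add,
      show j + 1 + (m + 1 - j) = m + 2 by omega, ZMod.natCast_self]

end Admissible

def powersetCardEquivAdmissible (ha : a ≤ m) : (innerPositions m).powersetCard a ≃
    {f : Fin (m + 2) → ZMod (m + 2) //
      Admissible (m + 2) f ∧ f (Fin.last (m + 1)) = ((a + 1 : ℕ) : ZMod (m + 2))} where
  toFun T := ⟨ofLowPositions T.1 T.2, admissible_ofLowPositions T.2, ofLowPositions_last T.2⟩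
  invFun f := ⟨lowPositions f.1 (a + 1), f.2.1.lowPositions_mem_powersetCard f.2.2 ha⟩
  left_inv T := Subtype.ext (lowPositions_ofLowPositions T.2)
  right_inv f := Subtype.ext (f.2.1.eq_ofLowPositions f.2.2 ha).symm

theorem card_admissible_apply_last_eq (ha : a ≤ m) :
    Nat.card {f : Fin (m + 2) → ZMod (m + 2) //
      Admissible (m + 2) f ∧ f (Fin.last (m + 1)) = ((a + 1 : ℕ) : ZMod (m + 2))} =
      m.choose a := by
  rw [← Nat.card_congr (powersetCardEquivAdmissible ha), Nat.card_eq_fintype_card,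
    Fintype.card_coe, card_powersetCard, card_innerPositions]

end Classification

/-- for `n ≥ 2` and `1 ≤ k ≤ n−1`, the number of admissible sequences whose
last entry equals `k` in `ZMod n` is the binomial coefficient `C(n−2, k−1)`. -/
theorem stmt_6 (n k : ℕ) (hn : 2 ≤ n) (hk1 : 1 ≤ k) (hk2 : k ≤ n - 1) :
    Nat.card {f : Fin n → ZMod n //
        Admissible n f ∧ f ⟨n - 1, by omega⟩ = (k : ZMod n)} =
      (n - 2).choose (k - 1) := by
  obtain ⟨m, rfl⟩ : ∃ m, n = m + 2 := ⟨n - 2, by omega⟩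
  obtain ⟨a, rfl⟩ : ∃ a, k = a + 1 := ⟨k - 1, by omega⟩
  rw [Nat.add_sub_cancel, Nat.add_sub_cancel]
  exact card_admissible_apply_last_eq (by omega)
end

section
/- Let n ≥ 3, let 1 ≤ k ≤ n−1, and let i = (i_1,…,i_n) be an admissible sequence with i_n = k in ℤ/nℤ. Then i can be transformed into the canonical admissible sequence i_k := (0, 1, 2, …, k−1, n−1, n−2, …, k+1) by a finite sequence of swaps of two consecutive entries at positions (m, m+1) with 2 ≤ m ≤ n−1, where each swap exchanges entries a, b with a ≠ b+1 and b ≠ a+1 in ℤ/nℤ, and every intermediate sequence is again admissible. -/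
/-- The canonical admissible sequence `i_k = (0, 1, …, k−1, n−1, n−2, …, k)` ending in `k`
(0-based: position `j` holds `j` if `j < k`, and `n−1−(j−k)` otherwise). -/
def canonicalSeq (n k : ℕ) : Fin n → ZMod n :=
  fun j => if j.val < k then (j.val : ZMod n) else ((n - 1 - (j.val - k) : ℕ) : ZMod n)

/-- One admissible swap: exchange the entries at (1-based) positions `(m, m+1)` with
`2 ≤ m ≤ n−1` (0-based positions `(m, m+1)` with `1 ≤ m ≤ n−2`), provided the two entries
are not neighbors in the cycle `ZMod n`. -/
def SwapStep (n : ℕ) (f g : Fin n → ZMod n) : Prop :=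
  ∃ (m : Fin n) (hm : m.val + 1 < n), 1 ≤ m.val ∧ m.val ≤ n - 2 ∧
    f m ≠ f ⟨m.val + 1, hm⟩ + 1 ∧ f ⟨m.val + 1, hm⟩ ≠ f m + 1 ∧
    g = f ∘ Equiv.swap m ⟨m.val + 1, hm⟩

/-!
Lift every entry of an admissible sequence `f` with last entry `k` to its integer representative
in `(k - n, k]`. Before the last position the wrap-around at `k` never occurs, so the lifted prefix
is an injective integer sequence starting at `0` in which each term is `±1` from an earlier one:
its values form an interval that grows by one at every step, to the right (a positive term) or to
the left (a negative term). A negative term directly followed by a positive one is never a pair of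
neighbours, and swapping the two keeps the sequence admissible and lowers the sum of the positions
of the positive terms. Once no such pair is left the positive terms come first, counting values in
`(k - n, k)` shows that they occupy exactly the positions `1, …, k - 1`, and the sequence is the
canonical one.
-/

namespace ZMod

variable {n : ℕ}

/-- The representative of `x` in the window `(k - n, k]`. -/
def repBelow (k : ℤ) (x : ZMod n) : ℤ := k - ((k : ZMod n) - x).val

theorem repBelow_le (k : ℤ) (x : ZMod n) : repBelow k x ≤ k :=
  sub_le_self _ (Int.natCast_nonneg _)

variable [NeZero n]

theorem intCast_repBelow (k : ℤ) (x : ZMod n) : ((repBelow k x : ℤ) : ZMod n) = x := by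
  simp [repBelow]

theorem sub_lt_repBelow (k : ℤ) (x : ZMod n) : k - n < repBelow k x := by
  have := ((k : ZMod n) - x).val_lt
  simp only [repBelow]
  omega

theorem repBelow_eq_iff {k a : ℤ} {x : ZMod n} :
    repBelow k x = a ↔ (a : ZMod n) = x ∧ k - n < a ∧ a ≤ k := by
  refine ⟨fun h => h ▸ ⟨intCast_repBelow k x, sub_lt_repBelow k x, repBelow_le k x⟩, ?_⟩
  rintro ⟨hx, hlo, hhi⟩
  have hdvd : (n : ℤ) ∣ a - repBelow k x :=
    (intCast_eq_intCast_iff_dvd_sub _ _ _).1 (by rw [hx, intCast_repBelow])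
  have := sub_lt_repBelow k x
  have := repBelow_le k x
  have := Int.eq_zero_of_abs_lt_dvd hdvd (abs_lt.2 ⟨by omega, by omega⟩)
  omega

theorem repBelow_injective (k : ℤ) : Function.Injective (repBelow (n := n) k) :=
  Function.LeftInverse.injective (intCast_repBelow k)

theorem repBelow_add_one {k : ℤ} {x : ZMod n} (hx : repBelow k x < k) :
    repBelow k (x + 1) = repBelow k x + 1 := by
  have := sub_lt_repBelow k x
  exact repBelow_eq_iff.2 ⟨by push_cast [intCast_repBelow]; rfl, by omega, by omega⟩

end ZMod

theorem Admissible.comp_swap {n : ℕ} {f : Fin n → ZMod n} (hf : Admissible n f) {m m' : Fin n}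
    (hm : 1 ≤ m.val) (hm' : m'.val = m.val + 1) (hne : f m ≠ f m' + 1) (hne' : f m' ≠ f m + 1) :
    Admissible n (f ∘ Equiv.swap m m') := by
  have hval : ∀ j : Fin n, (Equiv.swap m m' j).val =
      if j = m then m'.val else if j = m' then m.val else j.val := by
    intro j; rw [Equiv.swap_apply_def]; split_ifs <;> rfl
  refine ⟨hf.1.comp (Equiv.swap m m').bijective, fun h0 => ?_, fun j hj => ?_⟩
  · rw [Function.comp_apply, Equiv.swap_apply_of_ne_of_ne (Fin.ne_of_val_ne (by simp; omega))
      (Fin.ne_of_val_ne (by simp; omega))]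
    exact hf.2.1 h0
  · obtain ⟨l, hl, hadj⟩ := hf.2.2 (Equiv.swap m m' j) (by rw [hval]; split_ifs <;> omega)
    refine ⟨Equiv.swap m m' l, ?_, by simpa using hadj⟩
    -- `swap l < j` fails only for `j = l = m`, excluded since `f m` and `f m'` are not neighbours
    by_cases hlm : j = m ∧ l = m
    · obtain ⟨rfl, rfl⟩ := hlm
      simp only [Equiv.swap_apply_left] at hadj
      exact absurd (hadj.resolve_left hne') fun h => hne (by rw [h]; ring)
    · rw [Fin.lt_def] at hl ⊢
      rw [hval] at hl ⊢
      simp only [Fin.ext_iff] at hlm hl ⊢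
      split_ifs at hl ⊢ <;> omega

def posWeight {n : ℕ} (g : Fin n → ℤ) : ℕ := ∑ j, if 0 < g j then (j : ℕ) else 0

theorem posWeight_comp_swap_lt {n : ℕ} {g : Fin n → ℤ} {m m' : Fin n} (hm' : m'.val = m.val + 1)
    (hgm : g m ≤ 0) (hgm' : 0 < g m') : posWeight (g ∘ Equiv.swap m m') < posWeight g := by
  set σ := Equiv.swap m m'
  let w : Fin n → ℕ := fun i => if 0 < g i then (σ i : ℕ) else 0
  calc posWeight (g ∘ σ) = ∑ j, w (σ j) := by simp [posWeight, w, σ]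
    _ = ∑ j, w j := Equiv.sum_comp σ w
    _ < posWeight g := by
      refine Finset.sum_lt_sum (fun i _ => ?_) ⟨m', Finset.mem_univ _, ?_⟩
      · simp only [w, σ, Equiv.swap_apply_def]
        split_ifs with hpos him him'
        · exact absurd (him ▸ hpos) hgm.not_gt
        · omega
        all_goals simp
      · simp only [w, σ, Equiv.swap_apply_right, if_pos hgm']
        omega

theorem pos_iff_le_of_sign_sorted {N p : ℕ} {g : ℕ → ℤ} (h0 : g 0 = 0)
    (hinj : Set.InjOn g (Set.Iio N)) (hbound : ∀ j < N, (p : ℤ) + 1 - N ≤ g j ∧ g j ≤ p)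
    (hsorted : ∀ j, 0 < j → j + 1 < N → g j < 0 → g (j + 1) ≤ 0) :
    ∀ j, 0 < j → j < N → (0 < g j ↔ j ≤ p) := by
  have hne : ∀ j, 0 < j → j < N → g j ≠ 0 := fun j hj hjN h => by
    have := hinj (Set.mem_Iio.2 hjN) (Set.mem_Iio.2 (by omega)) (h.trans h0.symm)
    omega
  replace hsorted : ∀ i j, 0 < i → i ≤ j → j < N → g i < 0 → g j < 0 := by
    intro i j hi hij hjN hgi
    induction j, hij using Nat.le_induction with
    | base => exact hgi
    | succ j hij ih =>
      exact lt_of_le_of_ne (hsorted j (by omega) hjN (ih (by omega))) (hne _ (by omega) hjN)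
  -- pigeonhole: otherwise `g` maps `[1, j]` into `[1, p]`, resp. `[j, N)` into `[p + 1 - N, -1]`
  intro j hj hjN
  constructor
  · intro hpos
    by_contra! hpj
    have hcard := Finset.card_le_card_of_injOn g (s := Finset.Icc 1 j) (t := Finset.Icc 1 (p : ℤ))
      (fun i hi => by
        simp only [Finset.coe_Icc, Set.mem_Icc] at hi ⊢
        have := hbound i (by omega)
        have := hne i (by omega) (by omega)
        have : ¬ g i < 0 := fun h => (hsorted i j (by omega) hi.2 hjN h).not_gt hpos
        omega)
      (hinj.mono fun i hi => by simp only [Finset.coe_Icc, Set.mem_Icc, Set.mem_Iio] at hi ⊢; omega)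
    rw [Nat.card_Icc, Int.card_Icc] at hcard
    omega
  · intro hjp
    by_contra! hnpos
    have hneg : g j < 0 := lt_of_le_of_ne hnpos (hne j hj hjN)
    have hcard := Finset.card_le_card_of_injOn g (s := Finset.Ico j N)
      (t := Finset.Icc ((p : ℤ) + 1 - N) (-1))
      (fun i hi => by
        simp only [Finset.coe_Ico, Finset.coe_Icc, Set.mem_Icc, Set.mem_Ico] at hi ⊢
        have := hbound i hi.2
        have := hsorted j i hj hi.1 hi.2 hneg
        omega)
      (hinj.mono fun i hi => by simp only [Finset.coe_Ico, Set.mem_Ico, Set.mem_Iio] at hi ⊢; omega)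
    rw [Nat.card_Ico, Int.card_Icc] at hcard
    omega

theorem eq_ite_of_pos_iff_le {N p : ℕ} {g : ℕ → ℤ} (h0 : g 0 = 0) (hinj : Set.InjOn g (Set.Iio N))
    (hstep : ∀ j, 0 < j → j < N → ∃ l < j, g j = g l + 1 ∨ g j = g l - 1)
    (hsign : ∀ j, 0 < j → j < N → (0 < g j ↔ j ≤ p)) :
    ∀ j < N, g j = if j ≤ p then (j : ℤ) else p - j := by
  intro j
  induction j using Nat.strong_induction_on with
  | _ j ih =>
  intro hjN
  rcases Nat.eq_zero_or_pos j with rfl | hj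
  · simp [h0]
  obtain ⟨l, hl, hadj⟩ := hstep j hj hjN
  have hgl := ih l hl (by omega)
  have hnew : ∀ i < j, g j ≠ if i ≤ p then (i : ℤ) else p - i := fun i hi h => by
    rw [← ih i hi (by omega)] at h
    have := hinj (Set.mem_Iio.2 hjN) (Set.mem_Iio.2 (by omega)) h
    omega
  have hsj := hsign j hj hjN
  by_cases hjp : j ≤ p
  · rw [if_pos (by omega : l ≤ p)] at hgl
    rw [if_pos hjp]
    by_contra hne
    have hpos := hsj.2 hjp
    have hi := hnew (g j).toNat (by omega)
    rw [if_pos (by omega), Int.toNat_of_nonneg hpos.le] at hi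
    exact hi rfl
  · rw [if_neg hjp]
    have hge : p - j ≤ g j := by split_ifs at hgl <;> omega
    have hne0 := hnew 0 hj
    rw [if_pos (Nat.zero_le _)] at hne0
    by_contra hne
    have hi := hnew (p - g j).toNat (by omega)
    rw [if_neg (by omega), Int.toNat_of_nonneg (by omega)] at hi
    exact hi (by ring)

theorem canonicalSeq_apply (n k : ℕ) (j : Fin n) :
    canonicalSeq n k j = (((if j.val < k then (j : ℤ) else k - 1 - j) : ℤ) : ZMod n) := by
  unfold canonicalSeq
  split_ifs with hjk
  · simp
  · have : ((n - 1 - (j.val - k) : ℕ) : ℤ) = n + (k - 1 - j) := by omega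
    rw [← Int.cast_natCast, this]
    simp

section liftSeq

variable {n k : ℕ} {f : Fin n → ZMod n}

def liftSeq (k : ℕ) (f : Fin n → ZMod n) (j : ℕ) : ℤ :=
  if h : j < n then ZMod.repBelow k (f ⟨j, h⟩) else 0

theorem liftSeq_of_lt {j : ℕ} (h : j < n) : liftSeq k f j = ZMod.repBelow k (f ⟨j, h⟩) :=
  dif_pos h

variable [NeZero n]

theorem Admissible.liftSeq_zero (hf : Admissible n f) (hk : k < n) : liftSeq k f 0 = 0 := by
  rw [liftSeq_of_lt (Nat.pos_of_neZero n), hf.2.1, ZMod.repBelow_eq_iff]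
  exact ⟨Int.cast_zero, by omega, by omega⟩

theorem Admissible.injOn_liftSeq (hf : Admissible n f) : Set.InjOn (liftSeq k f) (Set.Iio n) := by
  intro i hi j hj h
  rw [liftSeq_of_lt hi, liftSeq_of_lt hj] at h
  exact Fin.mk.inj_iff.1 (hf.1.1 (ZMod.repBelow_injective _ h))

theorem Admissible.liftSeq_mem (hf : Admissible n f)
    (hlast : f ⟨n - 1, Nat.sub_one_lt (NeZero.ne n)⟩ = k) {j : ℕ} (hj : j < n - 1) :
    (k : ℤ) - n < liftSeq k f j ∧ liftSeq k f j < k := by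
  rw [liftSeq_of_lt (by omega)]
  refine ⟨ZMod.sub_lt_repBelow _ _, lt_of_le_of_ne (ZMod.repBelow_le _ _) fun h => ?_⟩
  have hfj : f ⟨j, by omega⟩ = f ⟨n - 1, Nat.sub_one_lt (NeZero.ne n)⟩ := by
    rw [← ZMod.intCast_repBelow (k : ℤ) (f _), h, hlast, Int.cast_natCast]
  have := Fin.mk.inj_iff.1 (hf.1.1 hfj)
  omega

theorem Admissible.exists_liftSeq_eq_add_one_or_sub_one (hf : Admissible n f)
    (hlast : f ⟨n - 1, Nat.sub_one_lt (NeZero.ne n)⟩ = k) {j : ℕ} (hj0 : 0 < j)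
    (hj : j < n - 1) :
    ∃ l < j, liftSeq k f j = liftSeq k f l + 1 ∨ liftSeq k f j = liftSeq k f l - 1 := by
  obtain ⟨l, hl, hadj⟩ := hf.2.2 ⟨j, by omega⟩ hj0
  have hlj : l.val < j := hl
  have hfl := hf.liftSeq_mem hlast (j := l) (by omega)
  have hfj := hf.liftSeq_mem hlast hj
  rw [liftSeq_of_lt l.isLt] at hfl
  rw [liftSeq_of_lt (by omega)] at hfj
  refine ⟨l, hlj, ?_⟩
  rw [liftSeq_of_lt (by omega), liftSeq_of_lt l.isLt]
  rcases hadj with h | h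
  · left
    rw [h, ZMod.repBelow_add_one hfl.2]
  · right
    rw [eq_sub_iff_add_eq] at h ⊢
    rw [← h, ZMod.repBelow_add_one hfj.2]

theorem Admissible.eq_canonicalSeq (hf : Admissible n f)
    (hlast : f ⟨n - 1, Nat.sub_one_lt (NeZero.ne n)⟩ = k) (hk1 : 1 ≤ k) (hk : k < n)
    (hsorted : ∀ j, 0 < j → j + 1 < n - 1 → liftSeq k f j < 0 → liftSeq k f (j + 1) ≤ 0) :
    f = canonicalSeq n k := by
  have h0 := hf.liftSeq_zero hk
  have hinj := hf.injOn_liftSeq (k := k) |>.mono (Set.Iio_subset_Iio (Nat.sub_le n 1))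
  have hsign := pos_iff_le_of_sign_sorted (p := k - 1) h0 hinj
    (fun j hj => by have := hf.liftSeq_mem hlast hj; omega) hsorted
  have hform := eq_ite_of_pos_iff_le h0 hinj
    (fun j hj0 hj => hf.exists_liftSeq_eq_add_one_or_sub_one hlast hj0 hj) hsign
  funext j
  rw [canonicalSeq_apply]
  by_cases hj : j.val < n - 1
  · rw [← ZMod.intCast_repBelow k (f j), ← liftSeq_of_lt j.isLt, hform j hj]
    congr 1
    split_ifs <;> omega
  · obtain rfl : j = ⟨n - 1, Nat.sub_one_lt (NeZero.ne n)⟩ := Fin.ext (show j.val = n - 1 by omega)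
    rw [hlast, if_neg (by simp; omega), show (k : ℤ) - 1 - ((n - 1 : ℕ) : ℤ) = k - n by omega]
    simp

theorem Admissible.exists_swapStep (hf : Admissible n f)
    (hlast : f ⟨n - 1, Nat.sub_one_lt (NeZero.ne n)⟩ = k) {m : ℕ} (hm0 : 0 < m)
    (hm : m + 1 < n - 1) (hneg : liftSeq k f m < 0) (hpos : 0 < liftSeq k f (m + 1)) :
    ∃ g, (SwapStep n f g ∧ Admissible n g) ∧ g ⟨n - 1, Nat.sub_one_lt (NeZero.ne n)⟩ = k ∧
      posWeight (ZMod.repBelow k ∘ g) < posWeight (ZMod.repBelow k ∘ f) := by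
  have hm1 := (hf.liftSeq_mem hlast hm).2
  have hm2 := (hf.liftSeq_mem hlast (j := m) (by omega)).2
  rw [liftSeq_of_lt (by omega)] at hneg hpos hm1 hm2
  -- below `k` lifting commutes with `+ 1`, and lifts of opposite signs differ by at least `2`
  have hne : f ⟨m, by omega⟩ ≠ f ⟨m + 1, by omega⟩ + 1 := fun h => by
    rw [h, ZMod.repBelow_add_one hm1] at hneg
    omega
  have hne' : f ⟨m + 1, by omega⟩ ≠ f ⟨m, by omega⟩ + 1 := fun h => by
    rw [h, ZMod.repBelow_add_one hm2] at hpos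
    omega
  have hstep : SwapStep n f (f ∘ Equiv.swap ⟨m, by omega⟩ ⟨m + 1, by omega⟩) :=
    ⟨⟨m, by omega⟩, by simp only; omega, hm0, by simp only; omega, hne, hne', rfl⟩
  refine ⟨_, ⟨hstep, hf.comp_swap hm0 rfl hne hne'⟩, ?_,
    posWeight_comp_swap_lt (g := ZMod.repBelow k ∘ f) rfl hneg.le hpos⟩
  rw [Function.comp_apply, Equiv.swap_apply_of_ne_of_ne (Fin.ne_of_val_ne (by simp only; omega))
    (Fin.ne_of_val_ne (by simp only; omega)), hlast]

theorem Admissible.reflTransGen_canonicalSeq (hf : Admissible n f) (hk1 : 1 ≤ k) (hk : k < n)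
    (hlast : f ⟨n - 1, Nat.sub_one_lt (NeZero.ne n)⟩ = k) :
    Relation.ReflTransGen (fun a b => SwapStep n a b ∧ Admissible n b) f (canonicalSeq n k) := by
  induction hw : posWeight (ZMod.repBelow k ∘ f) using Nat.strong_induction_on generalizing f with
  | _ w ih =>
  by_cases hinv : ∃ m, 0 < m ∧ m + 1 < n - 1 ∧ liftSeq k f m < 0 ∧ 0 < liftSeq k f (m + 1)
  · obtain ⟨m, hm0, hm, hneg, hpos⟩ := hinv
    obtain ⟨g, hstep, hglast, hlt⟩ := hf.exists_swapStep hlast hm0 hm hneg hpos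
    exact .head hstep (ih _ (hw ▸ hlt) hstep.2 hglast rfl)
  · push Not at hinv
    rw [← hf.eq_canonicalSeq hlast hk1 hk hinv]

end liftSeq

/-- for `n ≥ 3` and `1 ≤ k ≤ n−1`, every admissible sequence ending in `k`
can be transformed into the canonical admissible sequence `i_k` by finitely many swaps of
non-neighboring consecutive entries (never touching the first position), all intermediate
sequences being admissible. -/
theorem stmt_7 (n k : ℕ) (hk1 : 1 ≤ k) (hk2 : k ≤ n - 1)
    (f : Fin n → ZMod n) (hf : Admissible n f)
    (hlast : f ⟨n - 1, by omega⟩ = (k : ZMod n)) :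
    Relation.ReflTransGen (fun a b => SwapStep n a b ∧ Admissible n b)
      f (canonicalSeq n k) := by
  have : NeZero n := ⟨by omega⟩
  exact hf.reflTransGen_canonicalSeq hk1 (by omega) hlast
end
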